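/- arXiv:2007.05945 — 8 statements merged into one kernel-verified Lean document; each statement's English description precedes it below -/
import Mathlib

section
/- Let ξ₀ > 0 be a root of the quintic polynomial P₅, and set x₀ = (a₀ + 4a₁ξ₀ + 6a₂ξ₀² + 4a₃ξ₀³ + a₄ξ₀⁴)^(−1/3) and y₀ = ξ₀x₀. Then (x₀,y₀) is a positive fixed point of the quartic operator Q, i.e. x₀>0, y₀>0 and Q(x₀,y₀)=(x₀,y₀). -/
def quarticForm (c₀ c₁ c₂ c₃ c₄ x y : ℝ) : ℝ :=
  c₀ * x ^ 4 + 4 * c₁ * x ^ 3 * y + 6 * c₂ * x ^ 2 * y ^ 2 + 4 * c₃ * x * y ^ 3 + c₄ * y ^ 4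

section QuarticForm

variable (c₀ c₁ c₂ c₃ c₄ : ℝ)

lemma quarticForm_one_left (ξ : ℝ) :
    quarticForm c₀ c₁ c₂ c₃ c₄ 1 ξ =
      c₀ + 4 * c₁ * ξ + 6 * c₂ * ξ ^ 2 + 4 * c₃ * ξ ^ 3 + c₄ * ξ ^ 4 := by
  unfold quarticForm; ring

lemma quarticForm_mul_left (x ξ : ℝ) :
    quarticForm c₀ c₁ c₂ c₃ c₄ x (ξ * x) = x ^ 4 * quarticForm c₀ c₁ c₂ c₃ c₄ 1 ξ := by
  unfold quarticForm; ring

variable {c₀ c₁ c₂ c₃ c₄} in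
lemma quarticForm_one_left_pos (h₀ : 0 < c₀) (h₁ : 0 ≤ c₁) (h₂ : 0 ≤ c₂) (h₃ : 0 ≤ c₃)
    (h₄ : 0 ≤ c₄) {ξ : ℝ} (hξ : 0 ≤ ξ) : 0 < quarticForm c₀ c₁ c₂ c₃ c₄ 1 ξ := by
  rw [quarticForm_one_left]; positivity

end QuarticForm

lemma rpow_neg_one_div_three_pow_three_mul {A : ℝ} (hA : 0 < A) :
    (A ^ (-(1 / 3) : ℝ)) ^ 3 * A = 1 := by
  rw [← Real.rpow_natCast, ← Real.rpow_mul hA.le]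
  norm_num [Real.rpow_neg_one, hA.ne']

/-- On the ray `y = ξx` the map `(F, G)` of two quartic forms acts as `x ↦ x⁴ F(1, ξ)` in the first
coordinate, so `(x, ξx)` is fixed once `x³ F(1, ξ) = 1` and the ray is invariant, `G(1, ξ) = ξ F(1, ξ)`. -/
theorem quarticForm_fixed_point_on_ray (a₀ a₁ a₂ a₃ a₄ b₀ b₁ b₂ b₃ b₄ ξ x : ℝ)
    (hx : x ^ 3 * quarticForm a₀ a₁ a₂ a₃ a₄ 1 ξ = 1)
    (hray : quarticForm b₀ b₁ b₂ b₃ b₄ 1 ξ = ξ * quarticForm a₀ a₁ a₂ a₃ a₄ 1 ξ) :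
    quarticForm a₀ a₁ a₂ a₃ a₄ x (ξ * x) = x ∧ quarticForm b₀ b₁ b₂ b₃ b₄ x (ξ * x) = ξ * x := by
  rw [quarticForm_mul_left, quarticForm_mul_left, hray]
  constructor
  · linear_combination x * hx
  · linear_combination ξ * x * hx

theorem stmt_1_general (a₀ a₁ a₂ a₃ a₄ b₀ b₁ b₂ b₃ b₄ : ℝ)
    (ha₀ : 0 < a₀) (ha₁ : 0 < a₁) (ha₂ : 0 < a₂) (ha₃ : 0 < a₃) (ha₄ : 0 < a₄)
    (Q : ℝ × ℝ → ℝ × ℝ)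
    (hQ : ∀ x y : ℝ, Q (x, y) =
      (a₀ * x ^ 4 + 4 * a₁ * x ^ 3 * y + 6 * a₂ * x ^ 2 * y ^ 2 + 4 * a₃ * x * y ^ 3 + a₄ * y ^ 4,
       b₀ * x ^ 4 + 4 * b₁ * x ^ 3 * y + 6 * b₂ * x ^ 2 * y ^ 2 + 4 * b₃ * x * y ^ 3 + b₄ * y ^ 4))
    (P₅ : ℝ → ℝ)
    (hP₅ : ∀ ξ : ℝ, P₅ ξ = a₄ * ξ ^ 5 + (4 * a₃ - b₄) * ξ ^ 4 + (6 * a₂ - 4 * b₃) * ξ ^ 3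
      + (4 * a₁ - 6 * b₂) * ξ ^ 2 + (a₀ - 4 * b₁) * ξ - b₀)
    (ξ₀ : ℝ) (hξ₀ : 0 < ξ₀) (hroot : P₅ ξ₀ = 0)
    (x₀ y₀ : ℝ)
    (hx₀ : x₀ = (a₀ + 4 * a₁ * ξ₀ + 6 * a₂ * ξ₀ ^ 2 + 4 * a₃ * ξ₀ ^ 3 + a₄ * ξ₀ ^ 4) ^ (-(1 / 3) : ℝ))
    (hy₀ : y₀ = ξ₀ * x₀) :
    0 < x₀ ∧ 0 < y₀ ∧ Q (x₀, y₀) = (x₀, y₀) := by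
  have hA : 0 < quarticForm a₀ a₁ a₂ a₃ a₄ 1 ξ₀ :=
    quarticForm_one_left_pos ha₀ ha₁.le ha₂.le ha₃.le ha₄.le hξ₀.le
  rw [← quarticForm_one_left] at hx₀
  have hx₀pos : 0 < x₀ := hx₀ ▸ Real.rpow_pos_of_pos hA _
  have hray : quarticForm b₀ b₁ b₂ b₃ b₄ 1 ξ₀ = ξ₀ * quarticForm a₀ a₁ a₂ a₃ a₄ 1 ξ₀ := by
    rw [hP₅] at hroot
    rw [quarticForm_one_left, quarticForm_one_left]
    linear_combination -hroot
  obtain ⟨hfst, hsnd⟩ := quarticForm_fixed_point_on_ray a₀ a₁ a₂ a₃ a₄ b₀ b₁ b₂ b₃ b₄ ξ₀ x₀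
    (hx₀ ▸ rpow_neg_one_div_three_pow_three_mul hA) hray
  refine ⟨hx₀pos, hy₀ ▸ mul_pos hξ₀ hx₀pos, ?_⟩
  rw [hQ, hy₀]
  exact Prod.ext hfst hsnd

theorem stmt_1 (a₀ a₁ a₂ a₃ a₄ b₀ b₁ b₂ b₃ b₄ : ℝ)
    (ha₀ : 0 < a₀) (ha₁ : 0 < a₁) (ha₂ : 0 < a₂) (ha₃ : 0 < a₃) (ha₄ : 0 < a₄)
    (hb₀ : 0 < b₀) (hb₁ : 0 < b₁) (hb₂ : 0 < b₂) (hb₃ : 0 < b₃) (hb₄ : 0 < b₄)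
    (Q : ℝ × ℝ → ℝ × ℝ)
    (hQ : ∀ x y : ℝ, Q (x, y) =
      (a₀ * x ^ 4 + 4 * a₁ * x ^ 3 * y + 6 * a₂ * x ^ 2 * y ^ 2 + 4 * a₃ * x * y ^ 3 + a₄ * y ^ 4,
       b₀ * x ^ 4 + 4 * b₁ * x ^ 3 * y + 6 * b₂ * x ^ 2 * y ^ 2 + 4 * b₃ * x * y ^ 3 + b₄ * y ^ 4))
    (P₅ : ℝ → ℝ)
    (hP₅ : ∀ ξ : ℝ, P₅ ξ = a₄ * ξ ^ 5 + (4 * a₃ - b₄) * ξ ^ 4 + (6 * a₂ - 4 * b₃) * ξ ^ 3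
      + (4 * a₁ - 6 * b₂) * ξ ^ 2 + (a₀ - 4 * b₁) * ξ - b₀)
    (ξ₀ : ℝ) (hξ₀ : 0 < ξ₀) (hroot : P₅ ξ₀ = 0)
    (x₀ y₀ : ℝ)
    (hx₀ : x₀ = (a₀ + 4 * a₁ * ξ₀ + 6 * a₂ * ξ₀ ^ 2 + 4 * a₃ * ξ₀ ^ 3 + a₄ * ξ₀ ^ 4) ^ (-(1 / 3) : ℝ))
    (hy₀ : y₀ = ξ₀ * x₀) :
    0 < x₀ ∧ 0 < y₀ ∧ Q (x₀, y₀) = (x₀, y₀) :=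
  stmt_1_general a₀ a₁ a₂ a₃ a₄ b₀ b₁ b₂ b₃ b₄ ha₀ ha₁ ha₂ ha₃ ha₄ Q hQ P₅ hP₅ ξ₀ hξ₀ hroot x₀ y₀
    hx₀ hy₀
end

section
/- The map (x,y) ↦ y/x is a bijection from the set of positive fixed points of the quartic operator Q onto the set of positive roots of the quintic polynomial P₅; in particular, the number of positive fixed points of Q equals the number of positive real roots of P₅. -/
/-!
Write a point with `x > 0` as `(x, ξ x)`, `ξ = y / x`. A map `Q` homogeneous of degree `m + 1`
sends it to `x ^ (m + 1) • Q (1, ξ)`, so with `Q (1, ξ) = (f ξ, g ξ)` it is fixed exactly when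
`x ^ m f ξ = 1` and `ξ f ξ = g ξ`. For the quartic operator `ξ f ξ - g ξ` is `P₅`, and since `f ξ > 0`
the first equation has exactly one positive solution `x` for each such root `ξ`.
-/

open Set

lemma existsUnique_pos_pow_mul_eq_one {m : ℕ} (hm : m ≠ 0) {c : ℝ} (hc : 0 < c) :
    ∃! x : ℝ, 0 < x ∧ x ^ m * c = 1 := by
  refine ⟨c⁻¹ ^ (m⁻¹ : ℝ), ⟨by positivity, ?_⟩, ?_⟩
  · rw [Real.rpow_inv_natCast_pow (inv_pos.mpr hc).le hm, inv_mul_cancel₀ hc.ne']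
  · rintro x ⟨hx, hxc⟩
    rw [← pow_left_inj₀ hx.le (by positivity) hm, Real.rpow_inv_natCast_pow (inv_pos.mpr hc).le hm,
      eq_inv_of_mul_eq_one_left hxc]

section HomogeneousMap

variable {m : ℕ} {Q : ℝ × ℝ → ℝ × ℝ} {f g : ℝ → ℝ}

lemma apply_eq_self_iff_of_homogeneous (hQ : ∀ x ξ : ℝ, Q (x, ξ * x) = (x ^ (m + 1) * f ξ, x ^ (m + 1) * g ξ))
    {x : ℝ} (hx : 0 < x) (ξ : ℝ) :
    Q (x, ξ * x) = (x, ξ * x) ↔ x ^ m * f ξ = 1 ∧ ξ * f ξ = g ξ := by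
  have hxm : x ^ m ≠ 0 := pow_ne_zero _ hx.ne'
  rw [hQ, Prod.mk.injEq]
  constructor
  · rintro ⟨hfx, hgx⟩
    have hf : x ^ m * f ξ = 1 := mul_left_cancel₀ hx.ne' (by linear_combination hfx)
    have hg : x ^ m * g ξ = ξ := mul_left_cancel₀ hx.ne' (by linear_combination hgx)
    exact ⟨hf, mul_left_cancel₀ hxm (by linear_combination ξ * hf - hg)⟩
  · rintro ⟨hf, hg⟩
    constructor
    · linear_combination x * hf
    · linear_combination ξ * x * hf - x ^ (m + 1) * hg

lemma bijOn_div_fixedPoints_of_homogeneous (hm : m ≠ 0)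
    (hQ : ∀ x ξ : ℝ, Q (x, ξ * x) = (x ^ (m + 1) * f ξ, x ^ (m + 1) * g ξ))
    (hf : ∀ ξ, 0 < ξ → 0 < f ξ) {P : ℝ → ℝ} (hP : ∀ ξ, P ξ = ξ * f ξ - g ξ) :
    BijOn (fun p : ℝ × ℝ => p.2 / p.1) {p | 0 < p.1 ∧ 0 < p.2 ∧ Q p = p} {ξ | 0 < ξ ∧ P ξ = 0} := by
  have eq_div_mul {x y : ℝ} (hx : 0 < x) : y = y / x * x := (div_mul_cancel₀ y hx.ne').symm
  refine ⟨?mapsTo, ?injOn, ?surjOn⟩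
  case mapsTo =>
    rintro ⟨x, y⟩ ⟨hx, hy, hfixed⟩
    rw [eq_div_mul (y := y) hx, apply_eq_self_iff_of_homogeneous hQ hx] at hfixed
    exact ⟨div_pos hy hx, by rw [hP, hfixed.2, sub_self]⟩
  case injOn =>
    rintro ⟨x₁, y₁⟩ ⟨hx₁, hy₁, h₁⟩ ⟨x₂, y₂⟩ ⟨hx₂, -, h₂⟩ (hξ : y₁ / x₁ = y₂ / x₂)
    rw [eq_div_mul (y := y₁) hx₁, apply_eq_self_iff_of_homogeneous hQ hx₁] at h₁
    rw [eq_div_mul (y := y₂) hx₂, apply_eq_self_iff_of_homogeneous hQ hx₂, ← hξ] at h₂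
    have hx : x₁ = x₂ := (existsUnique_pos_pow_mul_eq_one hm (hf _ (div_pos hy₁ hx₁))).unique
      ⟨hx₁, h₁.1⟩ ⟨hx₂, h₂.1⟩
    exact Prod.ext hx (by rw [eq_div_mul (y := y₁) hx₁, eq_div_mul (y := y₂) hx₂, hξ, hx])
  case surjOn =>
    rintro ξ ⟨hξ, hroot⟩
    rw [hP, sub_eq_zero] at hroot
    obtain ⟨x, ⟨hx, hxf⟩, -⟩ := existsUnique_pos_pow_mul_eq_one hm (hf ξ hξ)
    exact ⟨(x, ξ * x), ⟨hx, mul_pos hξ hx, (apply_eq_self_iff_of_homogeneous hQ hx ξ).2 ⟨hxf, hroot⟩⟩,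
      mul_div_cancel_right₀ ξ hx.ne'⟩

end HomogeneousMap

theorem stmt_2_general (a₀ a₁ a₂ a₃ a₄ b₀ b₁ b₂ b₃ b₄ : ℝ)
    (ha₀ : 0 < a₀) (ha₁ : 0 < a₁) (ha₂ : 0 < a₂) (ha₃ : 0 < a₃) (ha₄ : 0 < a₄)
    (Q : ℝ × ℝ → ℝ × ℝ)
    (hQ : ∀ x y : ℝ, Q (x, y) =
      (a₀ * x ^ 4 + 4 * a₁ * x ^ 3 * y + 6 * a₂ * x ^ 2 * y ^ 2 + 4 * a₃ * x * y ^ 3 + a₄ * y ^ 4,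
       b₀ * x ^ 4 + 4 * b₁ * x ^ 3 * y + 6 * b₂ * x ^ 2 * y ^ 2 + 4 * b₃ * x * y ^ 3 + b₄ * y ^ 4))
    (P₅ : ℝ → ℝ)
    (hP₅ : ∀ ξ : ℝ, P₅ ξ = a₄ * ξ ^ 5 + (4 * a₃ - b₄) * ξ ^ 4 + (6 * a₂ - 4 * b₃) * ξ ^ 3
      + (4 * a₁ - 6 * b₂) * ξ ^ 2 + (a₀ - 4 * b₁) * ξ - b₀) :
    Set.BijOn (fun p : ℝ × ℝ => p.2 / p.1)
      {p : ℝ × ℝ | 0 < p.1 ∧ 0 < p.2 ∧ Q p = p}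
      {ξ : ℝ | 0 < ξ ∧ P₅ ξ = 0} ∧
    ({p : ℝ × ℝ | 0 < p.1 ∧ 0 < p.2 ∧ Q p = p}).encard = ({ξ : ℝ | 0 < ξ ∧ P₅ ξ = 0}).encard := by
  have hbij := bijOn_div_fixedPoints_of_homogeneous (m := 3) (Q := Q) (P := P₅) three_ne_zero
    (f := fun ξ => a₀ + 4 * a₁ * ξ + 6 * a₂ * ξ ^ 2 + 4 * a₃ * ξ ^ 3 + a₄ * ξ ^ 4)
    (g := fun ξ => b₀ + 4 * b₁ * ξ + 6 * b₂ * ξ ^ 2 + 4 * b₃ * ξ ^ 3 + b₄ * ξ ^ 4)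
    (fun x ξ => by rw [hQ]; ext <;> ring) (fun ξ hξ => by positivity) (fun ξ => by rw [hP₅]; ring)
  exact ⟨hbij, by rw [← hbij.image_eq, hbij.injOn.encard_image]⟩

theorem stmt_2 (a₀ a₁ a₂ a₃ a₄ b₀ b₁ b₂ b₃ b₄ : ℝ)
    (ha₀ : 0 < a₀) (ha₁ : 0 < a₁) (ha₂ : 0 < a₂) (ha₃ : 0 < a₃) (ha₄ : 0 < a₄)
    (hb₀ : 0 < b₀) (hb₁ : 0 < b₁) (hb₂ : 0 < b₂) (hb₃ : 0 < b₃) (hb₄ : 0 < b₄)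
    (Q : ℝ × ℝ → ℝ × ℝ)
    (hQ : ∀ x y : ℝ, Q (x, y) =
      (a₀ * x ^ 4 + 4 * a₁ * x ^ 3 * y + 6 * a₂ * x ^ 2 * y ^ 2 + 4 * a₃ * x * y ^ 3 + a₄ * y ^ 4,
       b₀ * x ^ 4 + 4 * b₁ * x ^ 3 * y + 6 * b₂ * x ^ 2 * y ^ 2 + 4 * b₃ * x * y ^ 3 + b₄ * y ^ 4))
    (P₅ : ℝ → ℝ)
    (hP₅ : ∀ ξ : ℝ, P₅ ξ = a₄ * ξ ^ 5 + (4 * a₃ - b₄) * ξ ^ 4 + (6 * a₂ - 4 * b₃) * ξ ^ 3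
      + (4 * a₁ - 6 * b₂) * ξ ^ 2 + (a₀ - 4 * b₁) * ξ - b₀) :
    Set.BijOn (fun p : ℝ × ℝ => p.2 / p.1)
      {p : ℝ × ℝ | 0 < p.1 ∧ 0 < p.2 ∧ Q p = p}
      {ξ : ℝ | 0 < ξ ∧ P₅ ξ = 0} ∧
    ({p : ℝ × ℝ | 0 < p.1 ∧ 0 < p.2 ∧ Q p = p}).encard = ({ξ : ℝ | 0 < ξ ∧ P₅ ξ = 0}).encard :=
  stmt_2_general a₀ a₁ a₂ a₃ a₄ b₀ b₁ b₂ b₃ b₄ ha₀ ha₁ ha₂ ha₃ ha₄ Q hQ P₅ hP₅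
end

section
/- The quartic operator Q has at least one positive fixed point, i.e. there exist x>0 and y>0 with Q(x,y)=(x,y). -/
/-! Write `Q = (A, B)`. Both components are forms of the same degree `n = 4 ≠ 1`, so it
suffices to find a ray `t ↦ t • (r, 1)` that `Q` maps into itself, i.e. a root `r > 0` of
`A(r,1) = r B(r,1)`; this exists by the intermediate value theorem, since the left side wins at
`r = 0` and the right side, of degree 5, wins for large `r`. On that ray
`Q(t r, t) = t ^ n B(r,1) (r, 1)`, and the fixed point is the `t` with `t ^ (n - 1) B(r,1) = 1`. -/

theorem exists_pos_eq_mul_of_lt_mul {f g : ℝ → ℝ} (hf : Continuous f) (hg : Continuous g)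
    (h0 : 0 < f 0) {R : ℝ} (hR : 0 < R) (hfR : f R < R * g R) :
    ∃ r, 0 < r ∧ f r = r * g r := by
  have hcont : ContinuousOn (fun r => f r - r * g r) (Set.Icc 0 R) := by fun_prop
  obtain ⟨r, hr, hr0⟩ := intermediate_value_Icc' hR.le hcont
    ⟨sub_nonpos.2 hfR.le, by simpa using h0.le⟩
  refine ⟨r, lt_of_le_of_ne hr.1 ?_, sub_eq_zero.1 hr0⟩
  rintro rfl
  simp only [zero_mul, sub_zero] at hr0
  exact h0.ne' hr0

theorem exists_pos_fixedPoint_of_homogeneous {A B : ℝ → ℝ → ℝ} {n : ℕ} (hn : n ≠ 1)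
    (hA : ∀ t x y, 0 < t → A (t * x) (t * y) = t ^ n * A x y)
    (hB : ∀ t x y, 0 < t → B (t * x) (t * y) = t ^ n * B x y)
    {r : ℝ} (hr : 0 < r) (hBr : 0 < B r 1) (hAB : A r 1 = r * B r 1) :
    ∃ x y, 0 < x ∧ 0 < y ∧ A x y = x ∧ B x y = y := by
  have hn' : (1 - n : ℝ) ≠ 0 := sub_ne_zero.2 (by exact_mod_cast hn.symm)
  set s := B r 1 ^ (1 - n : ℝ)⁻¹ with hs
  have hspos : 0 < s := Real.rpow_pos_of_pos hBr _
  have hscale : s ^ n * B r 1 = s := by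
    rw [hs, ← Real.rpow_natCast, ← Real.rpow_mul hBr.le, ← Real.rpow_add_one hBr.ne']
    congr 1
    field_simp
    ring
  have hAs := hA s r 1 hspos
  have hBs := hB s r 1 hspos
  rw [mul_one] at hAs hBs
  refine ⟨s * r, s, mul_pos hspos hr, hspos, ?_, ?_⟩
  · rw [hAs, hAB, mul_left_comm, hscale, mul_comm]
  · rw [hBs, hscale]

def binaryQuartic (c₀ c₁ c₂ c₃ c₄ x y : ℝ) : ℝ :=
  c₀ * x ^ 4 + 4 * c₁ * x ^ 3 * y + 6 * c₂ * x ^ 2 * y ^ 2 + 4 * c₃ * x * y ^ 3 + c₄ * y ^ 4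

section binaryQuartic

variable {c₀ c₁ c₂ c₃ c₄ : ℝ}

theorem binaryQuartic_mul_mul (t x y : ℝ) :
    binaryQuartic c₀ c₁ c₂ c₃ c₄ (t * x) (t * y) = t ^ 4 * binaryQuartic c₀ c₁ c₂ c₃ c₄ x y := by
  unfold binaryQuartic
  ring

@[fun_prop]
theorem continuous_binaryQuartic_one : Continuous (binaryQuartic c₀ c₁ c₂ c₃ c₄ · 1) := by
  unfold binaryQuartic
  fun_prop

theorem binaryQuartic_one_le (h₁ : 0 ≤ c₁) (h₂ : 0 ≤ c₂) (h₃ : 0 ≤ c₃) (h₄ : 0 ≤ c₄)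
    {x : ℝ} (hx : 1 ≤ x) :
    binaryQuartic c₀ c₁ c₂ c₃ c₄ x 1 ≤ (c₀ + 4 * c₁ + 6 * c₂ + 4 * c₃ + c₄) * x ^ 4 := by
  have hx₀ : 1 ≤ x ^ 4 := one_le_pow₀ hx
  have hx₁ : x ≤ x ^ 4 := le_self_pow₀ hx (by norm_num)
  have hx₂ : x ^ 2 ≤ x ^ 4 := pow_le_pow_right₀ hx (by norm_num)
  have hx₃ : x ^ 3 ≤ x ^ 4 := pow_le_pow_right₀ hx (by norm_num)
  unfold binaryQuartic
  nlinarith [mul_le_mul_of_nonneg_left hx₃ h₁, mul_le_mul_of_nonneg_left hx₂ h₂,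
    mul_le_mul_of_nonneg_left hx₁ h₃, mul_le_mul_of_nonneg_left hx₀ h₄]

theorem le_binaryQuartic_one (h₁ : 0 ≤ c₁) (h₂ : 0 ≤ c₂) (h₃ : 0 ≤ c₃) (h₄ : 0 ≤ c₄)
    {x : ℝ} (hx : 0 ≤ x) : c₀ * x ^ 4 ≤ binaryQuartic c₀ c₁ c₂ c₃ c₄ x 1 := by
  unfold binaryQuartic
  have : 0 ≤ 4 * c₁ * x ^ 3 + 6 * c₂ * x ^ 2 + 4 * c₃ * x + c₄ := by positivity
  linarith

end binaryQuartic

theorem exists_binaryQuartic_one_lt_mul {a₀ a₁ a₂ a₃ a₄ b₀ b₁ b₂ b₃ b₄ : ℝ}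
    (ha₀ : 0 ≤ a₀) (ha₁ : 0 ≤ a₁) (ha₂ : 0 ≤ a₂) (ha₃ : 0 ≤ a₃) (ha₄ : 0 ≤ a₄)
    (hb₀ : 0 < b₀) (hb₁ : 0 ≤ b₁) (hb₂ : 0 ≤ b₂) (hb₃ : 0 ≤ b₃) (hb₄ : 0 ≤ b₄) :
    ∃ R, 0 < R ∧
      binaryQuartic a₀ a₁ a₂ a₃ a₄ R 1 < R * binaryQuartic b₀ b₁ b₂ b₃ b₄ R 1 := by
  set S := a₀ + 4 * a₁ + 6 * a₂ + 4 * a₃ + a₄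
  have hS : 0 ≤ S := by positivity
  set R := S / b₀ + 1
  have hR : 1 ≤ R := le_add_of_nonneg_left (div_nonneg hS hb₀.le)
  have hSR : S < b₀ * R := by
    simp only [R, mul_add, mul_div_cancel₀ S hb₀.ne', mul_one]
    linarith
  refine ⟨R, by linarith, ?_⟩
  calc binaryQuartic a₀ a₁ a₂ a₃ a₄ R 1 ≤ S * R ^ 4 := binaryQuartic_one_le ha₁ ha₂ ha₃ ha₄ hR
    _ < b₀ * R * R ^ 4 := by gcongr
    _ = R * (b₀ * R ^ 4) := by ring
    _ ≤ R * binaryQuartic b₀ b₁ b₂ b₃ b₄ R 1 := by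
      gcongr
      exact le_binaryQuartic_one hb₁ hb₂ hb₃ hb₄ (by linarith)

theorem stmt_4 (a₀ a₁ a₂ a₃ a₄ b₀ b₁ b₂ b₃ b₄ : ℝ)
    (ha₀ : 0 < a₀) (ha₁ : 0 < a₁) (ha₂ : 0 < a₂) (ha₃ : 0 < a₃) (ha₄ : 0 < a₄)
    (hb₀ : 0 < b₀) (hb₁ : 0 < b₁) (hb₂ : 0 < b₂) (hb₃ : 0 < b₃) (hb₄ : 0 < b₄)
    (Q : ℝ × ℝ → ℝ × ℝ)
    (hQ : ∀ x y : ℝ, Q (x, y) =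
      (a₀ * x ^ 4 + 4 * a₁ * x ^ 3 * y + 6 * a₂ * x ^ 2 * y ^ 2 + 4 * a₃ * x * y ^ 3 + a₄ * y ^ 4,
       b₀ * x ^ 4 + 4 * b₁ * x ^ 3 * y + 6 * b₂ * x ^ 2 * y ^ 2 + 4 * b₃ * x * y ^ 3 + b₄ * y ^ 4)) :
    ∃ x y : ℝ, 0 < x ∧ 0 < y ∧ Q (x, y) = (x, y) := by
  obtain ⟨R, hR, hAR⟩ := exists_binaryQuartic_one_lt_mul ha₀.le ha₁.le ha₂.le ha₃.le ha₄.le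
    hb₀ hb₁.le hb₂.le hb₃.le hb₄.le
  obtain ⟨r, hr, hAr⟩ := exists_pos_eq_mul_of_lt_mul continuous_binaryQuartic_one
    continuous_binaryQuartic_one (by simpa [binaryQuartic] using ha₄) hR hAR
  have hBr : 0 < binaryQuartic b₀ b₁ b₂ b₃ b₄ r 1 := by unfold binaryQuartic; positivity
  obtain ⟨x, y, hx, hy, hAxy, hBxy⟩ := exists_pos_fixedPoint_of_homogeneous (n := 4) (by norm_num)
    (fun t x y _ => binaryQuartic_mul_mul t x y) (fun t x y _ => binaryQuartic_mul_mul t x y)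
    hr hBr hAr
  exact ⟨x, y, hx, hy, hQ x y ▸ Prod.ext hAxy hBxy⟩
end

section
/- The quartic operator Q has at most five positive fixed points, i.e. the set {(x,y) ∈ ℝ² : x>0, y>0, Q(x,y)=(x,y)} has cardinality at most 5. -/
/-!
A positive fixed point `p` of a map `F` that is positively homogeneous of degree `d ≠ 1` is
determined by its slope `t = p.2 / p.1`: if `q = c • p` is another fixed point with the same
slope, then `c • p = F (c • p) = c ^ d • p`, so `c = 1`. Writing `p = p.1 • (1, t)`, the fixed
point equation reads `p.1 ^ d • F (1, t) = p.1 • (1, t)`, which forces `t F₁(1, t) = F₂(1, t)`.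
For the quartic operator this is a polynomial equation of degree `5` in `t` with leading
coefficient `a₄`, so there are at most five slopes and hence at most five positive fixed points.
-/

open Polynomial Set

def posFixedPoints (F : ℝ × ℝ → ℝ × ℝ) : Set (ℝ × ℝ) :=
  {p | 0 < p.1 ∧ 0 < p.2 ∧ F p = p}

theorem fst_smul_one_slope {p : ℝ × ℝ} (hp : p.1 ≠ 0) : p.1 • ((1 : ℝ), p.2 / p.1) = p := by
  ext <;> simp [field]

section Homogeneous

variable {d : ℕ} {F : ℝ × ℝ → ℝ × ℝ}

theorem slope_injOn_posFixedPoints (hd : d ≠ 1)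
    (hF : ∀ c : ℝ, 0 < c → ∀ p, F (c • p) = c ^ d • F p) :
    InjOn (fun p : ℝ × ℝ => p.2 / p.1) (posFixedPoints F) := by
  rintro p ⟨hp₁, -, hFp⟩ q ⟨hq₁, -, hFq⟩ (hslope : p.2 / p.1 = q.2 / q.1)
  set c := q.1 / p.1
  have hc : 0 < c := div_pos hq₁ hp₁
  have hqp : q = c • p := by
    rw [← fst_smul_one_slope hp₁.ne', ← fst_smul_one_slope hq₁.ne', smul_smul, ← hslope]
    simp only [c, div_mul_cancel₀ _ hp₁.ne']
  have hcd : c ^ d = c ^ 1 := by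
    have h := congrArg Prod.fst (hqp ▸ hFq)
    rw [hF c hc, hFp, Prod.smul_fst, Prod.smul_fst, smul_eq_mul, smul_eq_mul] at h
    simpa using mul_right_cancel₀ hp₁.ne' h
  have hc1 : c = 1 := by
    by_contra hc1
    exact hd ((pow_right_inj₀ hc hc1).mp hcd)
  rw [hqp, hc1, one_smul]

theorem slope_mul_fst_eq_snd (hF : ∀ c : ℝ, 0 < c → ∀ p, F (c • p) = c ^ d • F p)
    {p : ℝ × ℝ} (hp : p ∈ posFixedPoints F) :
    p.2 / p.1 * (F (1, p.2 / p.1)).1 = (F (1, p.2 / p.1)).2 := by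
  obtain ⟨hp₁, -, hFp⟩ := hp
  set t := p.2 / p.1
  have hfix : p.1 ^ d • F (1, t) = p.1 • ((1 : ℝ), t) := by
    rw [← hF p.1 hp₁, fst_smul_one_slope hp₁.ne', hFp]
  have h₁ : p.1 ^ d * (F (1, t)).1 = p.1 := by simpa using congrArg Prod.fst hfix
  have h₂ : p.1 ^ d * (F (1, t)).2 = p.1 * t := by simpa using congrArg Prod.snd hfix
  have hpow : p.1 ^ d ≠ 0 := pow_ne_zero d hp₁.ne'
  apply mul_left_cancel₀ hpow
  linear_combination t * h₁ - h₂

theorem encard_le_natDegree_of_injOn {α R : Type*} [CommRing R] [IsDomain R] {S : Set α}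
    {f : α → R} {P : R[X]} (hf : InjOn f S) (hroot : MapsTo f S (P.rootSet R)) :
    S.encard ≤ P.natDegree := by
  calc S.encard = (f '' S).encard := hf.encard_image.symm
    _ ≤ (P.rootSet R).encard := encard_mono hroot.image_subset
    _ = (P.rootSet R).ncard := ((P.rootSet_finite R).cast_ncard_eq).symm
    _ ≤ P.natDegree := by exact_mod_cast P.ncard_rootSet_le R

theorem encard_posFixedPoints_le_natDegree (hd : d ≠ 1)
    (hF : ∀ c : ℝ, 0 < c → ∀ p, F (c • p) = c ^ d • F p) {P : ℝ[X]} (hP : P ≠ 0)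
    (hPF : ∀ t, P.eval t = t * (F (1, t)).1 - (F (1, t)).2) :
    (posFixedPoints F).encard ≤ P.natDegree := by
  refine encard_le_natDegree_of_injOn (slope_injOn_posFixedPoints hd hF) fun p hp => ?_
  rw [mem_rootSet, coe_aeval_eq_eval, hPF, slope_mul_fst_eq_snd hF hp, sub_self]
  exact ⟨hP, rfl⟩

end Homogeneous

/-- `t ↦ t Q₁(1, t) - Q₂(1, t)` for the quartic operator `Q`. -/
noncomputable def quarticSlopePoly (a₀ a₁ a₂ a₃ a₄ b₀ b₁ b₂ b₃ b₄ : ℝ) : ℝ[X] :=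
  C a₄ * X ^ 5 + C (4 * a₃ - b₄) * X ^ 4 + C (6 * a₂ - 4 * b₃) * X ^ 3 +
    C (4 * a₁ - 6 * b₂) * X ^ 2 + C (a₀ - 4 * b₁) * X + C (-b₀)

theorem natDegree_quarticSlopePoly {a₀ a₁ a₂ a₃ a₄ b₀ b₁ b₂ b₃ b₄ : ℝ} (ha₄ : a₄ ≠ 0) :
    (quarticSlopePoly a₀ a₁ a₂ a₃ a₄ b₀ b₁ b₂ b₃ b₄).natDegree = 5 := by
  unfold quarticSlopePoly
  compute_degree!

theorem stmt_5_general (a₀ a₁ a₂ a₃ a₄ b₀ b₁ b₂ b₃ b₄ : ℝ)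
    (ha₄ : 0 < a₄)
    (Q : ℝ × ℝ → ℝ × ℝ)
    (hQ : ∀ x y : ℝ, Q (x, y) =
      (a₀ * x ^ 4 + 4 * a₁ * x ^ 3 * y + 6 * a₂ * x ^ 2 * y ^ 2 + 4 * a₃ * x * y ^ 3 + a₄ * y ^ 4,
       b₀ * x ^ 4 + 4 * b₁ * x ^ 3 * y + 6 * b₂ * x ^ 2 * y ^ 2 + 4 * b₃ * x * y ^ 3 + b₄ * y ^ 4)) :
    ({p : ℝ × ℝ | 0 < p.1 ∧ 0 < p.2 ∧ Q p = p}).encard ≤ 5 := by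
  have hhom : ∀ c : ℝ, 0 < c → ∀ p, Q (c • p) = c ^ 4 • Q p := by
    rintro c - ⟨x, y⟩
    simp only [Prod.smul_mk, smul_eq_mul, hQ]
    ext <;> ring
  set P := quarticSlopePoly a₀ a₁ a₂ a₃ a₄ b₀ b₁ b₂ b₃ b₄
  have hslope : ∀ t, P.eval t = t * (Q (1, t)).1 - (Q (1, t)).2 := by
    intro t
    simp only [P, quarticSlopePoly, eval_add, eval_mul, eval_pow, eval_C, eval_X, hQ]
    ring
  have hdeg : P.natDegree = 5 := natDegree_quarticSlopePoly ha₄.ne'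
  have hne : P ≠ 0 := ne_zero_of_natDegree_gt (n := 0) (by rw [hdeg]; norm_num)
  have hbound := encard_posFixedPoints_le_natDegree (by norm_num) hhom hne hslope
  rw [hdeg] at hbound
  exact_mod_cast hbound

theorem stmt_5 (a₀ a₁ a₂ a₃ a₄ b₀ b₁ b₂ b₃ b₄ : ℝ)
    (ha₀ : 0 < a₀) (ha₁ : 0 < a₁) (ha₂ : 0 < a₂) (ha₃ : 0 < a₃) (ha₄ : 0 < a₄)
    (hb₀ : 0 < b₀) (hb₁ : 0 < b₁) (hb₂ : 0 < b₂) (hb₃ : 0 < b₃) (hb₄ : 0 < b₄)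
    (Q : ℝ × ℝ → ℝ × ℝ)
    (hQ : ∀ x y : ℝ, Q (x, y) =
      (a₀ * x ^ 4 + 4 * a₁ * x ^ 3 * y + 6 * a₂ * x ^ 2 * y ^ 2 + 4 * a₃ * x * y ^ 3 + a₄ * y ^ 4,
       b₀ * x ^ 4 + 4 * b₁ * x ^ 3 * y + 6 * b₂ * x ^ 2 * y ^ 2 + 4 * b₃ * x * y ^ 3 + b₄ * y ^ 4)) :
    ({p : ℝ × ℝ | 0 < p.1 ∧ 0 < p.2 ∧ Q p = p}).encard ≤ 5 :=
  stmt_5_general a₀ a₁ a₂ a₃ a₄ b₀ b₁ b₂ b₃ b₄ ha₄ Q hQ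
end

section
/- Suppose the four critical points λ₁<λ₂<λ₃<λ₄ of P₅ are all positive, i.e. λ₁ > 0, and that P₅(λ₁) > 0 and P₅(λ₄) < 0. Then the quartic operator Q has at least three positive fixed points: there exist at least three distinct pairs (x,y) with x>0, y>0 and Q(x,y)=(x,y). -/
/-!
Writing `Q = (F, G)` with `F, G` binary quartic forms, one has
`P₅ ξ = ξ * F (1, ξ) - G (1, ξ)`, so a root `r > 0` of `P₅` makes `(1, r)` an eigenvector of `Q`
with eigenvalue `F (1, r) > 0`, and by homogeneity a positive multiple of `(1, r)` is a fixed point.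
Distinct roots give fixed points with distinct slopes `y / x`. Since `P₅ 0 = -b₀ < 0`,
`P₅ λ₁ > 0`, `P₅ λ₄ < 0` and `P₅ → +∞`, the intermediate value theorem gives a positive root
in each of `(0, λ₁)`, `(λ₁, λ₄)` and `(λ₄, ∞)`.
-/

open Filter Polynomial

theorem exists_pos_isFixedPt_smul_of_eq_smul {E : Type*} [AddCommGroup E] [Module ℝ E]
    {Q : E → E} {n : ℕ} (hQ : ∀ (t : ℝ) (v : E), Q (t • v) = t ^ n • Q v) (hn : n ≠ 1)
    {v : E} {c : ℝ} (hc : 0 < c) (hv : Q v = c • v) :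
    ∃ t : ℝ, 0 < t ∧ Function.IsFixedPt Q (t • v) := by
  -- `t = c ^ (-1 / (n - 1))` is the positive solution of `t ^ n * c = t`.
  refine ⟨c ^ (-1 / ((n : ℝ) - 1)), by positivity, ?_⟩
  have hn' : (n : ℝ) - 1 ≠ 0 := sub_ne_zero.2 (by exact_mod_cast hn)
  rw [Function.IsFixedPt, hQ, hv, smul_smul, ← Real.rpow_natCast, ← Real.rpow_mul hc.le,
    ← Real.rpow_add_one hc.ne']
  congr 2
  field_simp
  ring

theorem tendsto_quintic_atTop {a : ℝ} (ha : 0 < a) (c₄ c₃ c₂ c₁ c₀ : ℝ) :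
    Tendsto (fun ξ : ℝ => a * ξ ^ 5 + c₄ * ξ ^ 4 + c₃ * ξ ^ 3 + c₂ * ξ ^ 2 + c₁ * ξ + c₀)
      atTop atTop := by
  set P : ℝ[X] := C a * X ^ 5 + C c₄ * X ^ 4 + C c₃ * X ^ 3 + C c₂ * X ^ 2 + C c₁ * X + C c₀
  have hdeg : P.natDegree = 5 := by
    simp only [P]
    compute_degree!
    exact ha.ne'
  have hlead : P.leadingCoeff = a := by
    rw [leadingCoeff, hdeg]
    simp [P]
  have hdeg_pos : 0 < P.degree := natDegree_pos_iff_degree_pos.1 (by rw [hdeg]; norm_num)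
  simpa [P] using tendsto_atTop_of_leadingCoeff_nonneg P hdeg_pos (hlead ▸ ha.le)

theorem three_le_encard_pos_zeros {f : ℝ → ℝ} (hf : Continuous f) (htop : Tendsto f atTop atTop)
    {l₁ l₄ : ℝ} (hl₁ : 0 < l₁) (hl : l₁ < l₄) (hf₀ : f 0 < 0) (hf₁ : 0 < f l₁) (hf₄ : f l₄ < 0) :
    3 ≤ {r | 0 < r ∧ f r = 0}.encard := by
  obtain ⟨T, hfT, hT⟩ := ((htop.eventually_gt_atTop 0).and (eventually_gt_atTop l₄)).exists
  obtain ⟨r₁, ⟨hr₁, hr₁'⟩, hfr₁⟩ :=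
    intermediate_value_Ioo hl₁.le hf.continuousOn
      (show (0 : ℝ) ∈ Set.Ioo (f 0) (f l₁) from ⟨hf₀, hf₁⟩)
  obtain ⟨r₂, ⟨hr₂, hr₂'⟩, hfr₂⟩ :=
    intermediate_value_Ioo' hl.le hf.continuousOn
      (show (0 : ℝ) ∈ Set.Ioo (f l₄) (f l₁) from ⟨hf₄, hf₁⟩)
  obtain ⟨r₃, ⟨hr₃, -⟩, hfr₃⟩ :=
    intermediate_value_Ioo hT.le hf.continuousOn
      (show (0 : ℝ) ∈ Set.Ioo (f l₄) (f T) from ⟨hf₄, hfT⟩)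
  have hthree : ({r₁, r₂, r₃} : Set ℝ).encard = 3 :=
    Set.encard_eq_three.2 ⟨r₁, r₂, r₃, by linarith, by linarith, by linarith, rfl⟩
  rw [← hthree]
  apply Set.encard_le_encard
  rintro r (rfl | rfl | rfl)
  exacts [⟨hr₁, hfr₁⟩, ⟨by linarith, hfr₂⟩, ⟨by linarith, hfr₃⟩]

section Quartic

variable {a₀ a₁ a₂ a₃ a₄ b₀ b₁ b₂ b₃ b₄ : ℝ} {Q : ℝ × ℝ → ℝ × ℝ}
  (hQ : ∀ x y : ℝ, Q (x, y) =
      (a₀ * x ^ 4 + 4 * a₁ * x ^ 3 * y + 6 * a₂ * x ^ 2 * y ^ 2 + 4 * a₃ * x * y ^ 3 + a₄ * y ^ 4,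
       b₀ * x ^ 4 + 4 * b₁ * x ^ 3 * y + 6 * b₂ * x ^ 2 * y ^ 2 + 4 * b₃ * x * y ^ 3 + b₄ * y ^ 4))
include hQ

theorem quartic_smul (t : ℝ) (p : ℝ × ℝ) : Q (t • p) = t ^ 4 • Q p := by
  obtain ⟨x, y⟩ := p
  simp only [Prod.smul_mk, smul_eq_mul, hQ]
  ext <;> ring

theorem quartic_eq_smul_of_root {r : ℝ}
    (hroot : a₄ * r ^ 5 + (4 * a₃ - b₄) * r ^ 4 + (6 * a₂ - 4 * b₃) * r ^ 3
      + (4 * a₁ - 6 * b₂) * r ^ 2 + (a₀ - 4 * b₁) * r - b₀ = 0) :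
    Q (1, r) = (a₀ + 4 * a₁ * r + 6 * a₂ * r ^ 2 + 4 * a₃ * r ^ 3 + a₄ * r ^ 4) • (1, r) := by
  rw [hQ, Prod.smul_mk, smul_eq_mul, smul_eq_mul, Prod.mk.injEq]
  constructor
  · ring
  · linear_combination -hroot

end Quartic

theorem stmt_10_general (a₀ a₁ a₂ a₃ a₄ b₀ b₁ b₂ b₃ b₄ : ℝ)
    (ha₀ : 0 < a₀) (ha₁ : 0 < a₁) (ha₂ : 0 < a₂) (ha₃ : 0 < a₃) (ha₄ : 0 < a₄)
    (hb₀ : 0 < b₀)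
    (Q : ℝ × ℝ → ℝ × ℝ)
    (hQ : ∀ x y : ℝ, Q (x, y) =
      (a₀ * x ^ 4 + 4 * a₁ * x ^ 3 * y + 6 * a₂ * x ^ 2 * y ^ 2 + 4 * a₃ * x * y ^ 3 + a₄ * y ^ 4,
       b₀ * x ^ 4 + 4 * b₁ * x ^ 3 * y + 6 * b₂ * x ^ 2 * y ^ 2 + 4 * b₃ * x * y ^ 3 + b₄ * y ^ 4))
    (P₅ : ℝ → ℝ)
    (hP₅ : ∀ ξ : ℝ, P₅ ξ = a₄ * ξ ^ 5 + (4 * a₃ - b₄) * ξ ^ 4 + (6 * a₂ - 4 * b₃) * ξ ^ 3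
      + (4 * a₁ - 6 * b₂) * ξ ^ 2 + (a₀ - 4 * b₁) * ξ - b₀)
    (lam₁ lam₂ lam₃ lam₄ : ℝ) (h12 : lam₁ < lam₂) (h23 : lam₂ < lam₃) (h34 : lam₃ < lam₄)
    (hpos : 0 < lam₁) (hval₁ : 0 < P₅ lam₁) (hval₄ : P₅ lam₄ < 0) :
    3 ≤ ({p : ℝ × ℝ | 0 < p.1 ∧ 0 < p.2 ∧ Q p = p}).encard := by
  have hP : P₅ = fun ξ => a₄ * ξ ^ 5 + (4 * a₃ - b₄) * ξ ^ 4 + (6 * a₂ - 4 * b₃) * ξ ^ 3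
      + (4 * a₁ - 6 * b₂) * ξ ^ 2 + (a₀ - 4 * b₁) * ξ - b₀ := funext hP₅
  have hroots : 3 ≤ {r | 0 < r ∧ P₅ r = 0}.encard :=
    three_le_encard_pos_zeros (by rw [hP]; fun_prop)
      ((tendsto_quintic_atTop ha₄ (4 * a₃ - b₄) (6 * a₂ - 4 * b₃) (4 * a₁ - 6 * b₂) (a₀ - 4 * b₁)
        (-b₀)).congr fun ξ => by rw [hP₅]; ring)
      hpos (h12.trans (h23.trans h34)) (by rw [hP₅]; linarith) hval₁ hval₄
  have hslopes : {r | 0 < r ∧ P₅ r = 0} ⊆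
      (fun p : ℝ × ℝ => p.2 / p.1) '' {p | 0 < p.1 ∧ 0 < p.2 ∧ Q p = p} := by
    rintro r ⟨hr, hroot⟩
    obtain ⟨t, ht, hfix⟩ := exists_pos_isFixedPt_smul_of_eq_smul (quartic_smul hQ) (by norm_num)
      (by positivity) (quartic_eq_smul_of_root hQ (hP₅ r ▸ hroot))
    refine ⟨t • (1, r), ⟨?_, ?_, hfix⟩, ?_⟩ <;> simp only [Prod.smul_mk, smul_eq_mul, mul_one]
    exacts [ht, mul_pos ht hr, mul_div_cancel_left₀ r ht.ne']
  exact hroots.trans ((Set.encard_le_encard hslopes).trans (Set.encard_image_le _ _))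

theorem stmt_10 (a₀ a₁ a₂ a₃ a₄ b₀ b₁ b₂ b₃ b₄ : ℝ)
    (ha₀ : 0 < a₀) (ha₁ : 0 < a₁) (ha₂ : 0 < a₂) (ha₃ : 0 < a₃) (ha₄ : 0 < a₄)
    (hb₀ : 0 < b₀) (hb₁ : 0 < b₁) (hb₂ : 0 < b₂) (hb₃ : 0 < b₃) (hb₄ : 0 < b₄)
    (Q : ℝ × ℝ → ℝ × ℝ)
    (hQ : ∀ x y : ℝ, Q (x, y) =
      (a₀ * x ^ 4 + 4 * a₁ * x ^ 3 * y + 6 * a₂ * x ^ 2 * y ^ 2 + 4 * a₃ * x * y ^ 3 + a₄ * y ^ 4,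
       b₀ * x ^ 4 + 4 * b₁ * x ^ 3 * y + 6 * b₂ * x ^ 2 * y ^ 2 + 4 * b₃ * x * y ^ 3 + b₄ * y ^ 4))
    (P₅ : ℝ → ℝ)
    (hP₅ : ∀ ξ : ℝ, P₅ ξ = a₄ * ξ ^ 5 + (4 * a₃ - b₄) * ξ ^ 4 + (6 * a₂ - 4 * b₃) * ξ ^ 3
      + (4 * a₁ - 6 * b₂) * ξ ^ 2 + (a₀ - 4 * b₁) * ξ - b₀)
    (lam₁ lam₂ lam₃ lam₄ : ℝ) (h12 : lam₁ < lam₂) (h23 : lam₂ < lam₃) (h34 : lam₃ < lam₄)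
    (hcrit : ∀ ξ : ℝ, deriv P₅ ξ = 5 * a₄ * (ξ - lam₁) * (ξ - lam₂) * (ξ - lam₃) * (ξ - lam₄))
    (hpos : 0 < lam₁) (hval₁ : 0 < P₅ lam₁) (hval₄ : P₅ lam₄ < 0) :
    3 ≤ ({p : ℝ × ℝ | 0 < p.1 ∧ 0 < p.2 ∧ Q p = p}).encard :=
  stmt_10_general a₀ a₁ a₂ a₃ a₄ b₀ b₁ b₂ b₃ b₄ ha₀ ha₁ ha₂ ha₃ ha₄ hb₀ Q hQ P₅ hP₅ lam₁ lam₂ lam₃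
    lam₄ h12 h23 h34 hpos hval₁ hval₄
end

section
/- Suppose the four critical points λ₁<λ₂<λ₃<λ₄ of P₅ are all positive, i.e. λ₁ > 0, and that P₅(λ₁) < 0 and P₅(λ₃) < 0. Then the quartic operator Q has exactly one positive fixed point: the set {(x,y) ∈ ℝ² : x>0, y>0, Q(x,y)=(x,y)} has cardinality exactly 1. -/
/-!
`Q` is homogeneous of degree 4, so along the ray through `(1, ξ)` it acts by
`Q (x, ξ x) = x⁴ (A ξ, B ξ)` with `(A ξ, B ξ) = Q (1, ξ)`. Hence `(x, ξ x)` is fixed iff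
`x³ A ξ = 1` and `B ξ = ξ A ξ`; the second condition is `P₅ ξ = ξ A ξ - B ξ = 0`, and then the first
determines `x`. Positive fixed points thus correspond to positive roots of `P₅`. The sign pattern of
`P₅'` gives `P₅ ≤ max (P₅ λ₁) (P₅ λ₃) < 0` on `(-∞, λ₄]`, while `P₅` increases strictly to `+∞`
on `[λ₄, ∞)`; so `P₅` has exactly one real root, and it exceeds `λ₄ > 0`.
-/

open Set Filter

section Homogeneous

variable {n : ℕ} {Q : ℝ × ℝ → ℝ × ℝ}

theorem map_smul_eq_smul_iff_of_homogeneous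
    (hQ : ∀ t : ℝ, 0 < t → ∀ v, Q (t • v) = t ^ (n + 1) • Q v) {x : ℝ} (hx : 0 < x) (ξ : ℝ) :
    Q (x • (1, ξ)) = x • (1, ξ) ↔ x ^ n * (Q (1, ξ)).1 = 1 ∧ (Q (1, ξ)).2 = ξ * (Q (1, ξ)).1 := by
  rw [hQ x hx, Prod.ext_iff]
  generalize Q (1, ξ) = q
  simp only [Prod.smul_fst, Prod.smul_snd, smul_eq_mul, mul_one, pow_succ]
  constructor
  · rintro ⟨h₁, h₂⟩
    have h₁' : x ^ n * q.1 = 1 := mul_left_cancel₀ hx.ne' (by linear_combination h₁)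
    refine ⟨h₁', mul_left_cancel₀ (pow_pos hx (n + 1)).ne' ?_⟩
    linear_combination h₂ - ξ * x * h₁'
  · rintro ⟨h₁, h₂⟩
    exact ⟨by linear_combination x * h₁, by linear_combination x ^ n * x * h₂ + x * ξ * h₁⟩

theorem setOf_pos_fixed_eq_image_of_homogeneous (hn : n ≠ 0)
    (hQ : ∀ t : ℝ, 0 < t → ∀ v, Q (t • v) = t ^ (n + 1) • Q v) :
    {p : ℝ × ℝ | 0 < p.1 ∧ 0 < p.2 ∧ Q p = p} =
      (fun ξ => (Q (1, ξ)).1⁻¹ ^ (n⁻¹ : ℝ) • ((1 : ℝ), ξ)) ''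
        {ξ | 0 < ξ ∧ 0 < (Q (1, ξ)).1 ∧ (Q (1, ξ)).2 = ξ * (Q (1, ξ)).1} := by
  ext p
  constructor
  · rintro ⟨hx, hy, hfix⟩
    obtain ⟨x, y⟩ := p
    have hp : ((x, y) : ℝ × ℝ) = x • (1, y / x) := by
      simp [Prod.smul_mk, mul_div_cancel₀ y hx.ne']
    rw [hp, map_smul_eq_smul_iff_of_homogeneous hQ hx] at hfix
    obtain ⟨h₁, h₂⟩ := hfix
    have hA : 0 < (Q (1, y / x)).1 :=
      (pos_iff_pos_of_mul_pos (by rw [h₁]; exact one_pos)).1 (pow_pos hx n)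
    have hx' : (Q (1, y / x)).1⁻¹ ^ (n⁻¹ : ℝ) = x := by
      rw [← eq_inv_of_mul_eq_one_left h₁, Real.pow_rpow_inv_natCast hx.le hn]
    exact ⟨y / x, ⟨div_pos hy hx, hA, h₂⟩, by simp only [hx', ← hp]⟩
  · rintro ⟨ξ, ⟨hξ, hA, h₂⟩, rfl⟩
    set x := (Q (1, ξ)).1⁻¹ ^ (n⁻¹ : ℝ)
    have hx : 0 < x := Real.rpow_pos_of_pos (inv_pos.2 hA) _
    have h₁ : x ^ n * (Q (1, ξ)).1 = 1 := by
      rw [Real.rpow_inv_natCast_pow (inv_nonneg.2 hA.le) hn, inv_mul_cancel₀ hA.ne']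
    refine ⟨by simpa using hx, by simpa using mul_pos hx hξ, ?_⟩
    exact (map_smul_eq_smul_iff_of_homogeneous hQ hx ξ).2 ⟨h₁, h₂⟩

end Homogeneous

theorem tendsto_atTop_of_le_deriv {f : ℝ → ℝ} {a c : ℝ} (hc : 0 < c)
    (hf : ContinuousOn f (Ici a)) (hf' : ∀ x ∈ Ioi a, c ≤ deriv f x) :
    Tendsto f atTop atTop := by
  rw [← interior_Ici] at hf'
  have hdiff : DifferentiableOn ℝ f (interior (Ici a)) := fun x hx =>
    (differentiableAt_of_deriv_ne_zero (hc.trans_le (hf' x hx)).ne').differentiableWithinAt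
  have hgrowth : ∀ x ∈ Ici a, c * x + (f a - c * a) ≤ f x := fun x hx => by
    have := (convex_Ici a).mul_sub_le_image_sub_of_le_deriv hf hdiff hf' a self_mem_Ici x hx hx
    linarith
  exact tendsto_atTop_mono' _ ((eventually_ge_atTop a).mono hgrowth)
    (tendsto_atTop_add_const_right _ _ (tendsto_id.const_mul_atTop hc))

section QuarticDerivative

variable {f : ℝ → ℝ} {c l₁ l₂ l₃ l₄ : ℝ}

theorem neg_of_le_of_deriv_eq (hf : Continuous f) (hc : 0 < c)
    (h12 : l₁ < l₂) (h23 : l₂ < l₃) (h34 : l₃ < l₄)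
    (hf' : ∀ x, deriv f x = c * (x - l₁) * (x - l₂) * (x - l₃) * (x - l₄))
    (h₁ : f l₁ < 0) (h₃ : f l₃ < 0) {x : ℝ} (hx : x ≤ l₄) : f x < 0 := by
  have hmono₁ : StrictMonoOn f (Iic l₁) :=
    strictMonoOn_of_deriv_pos (convex_Iic _) hf.continuousOn fun x hx => by
      rw [interior_Iic, mem_Iio] at hx
      have : 0 < c * (l₁ - x) * (l₂ - x) * (l₃ - x) * (l₄ - x) := by
        repeat' apply mul_pos
        all_goals linarith
      linarith [hf' x]
  have hanti₁ : StrictAntiOn f (Icc l₁ l₂) :=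
    strictAntiOn_of_deriv_neg (convex_Icc _ _) hf.continuousOn fun x hx => by
      rw [interior_Icc, mem_Ioo] at hx
      have : 0 < c * (x - l₁) * (l₂ - x) * (l₃ - x) * (l₄ - x) := by
        repeat' apply mul_pos
        all_goals linarith
      linarith [hf' x]
  have hmono₂ : StrictMonoOn f (Icc l₂ l₃) :=
    strictMonoOn_of_deriv_pos (convex_Icc _ _) hf.continuousOn fun x hx => by
      rw [interior_Icc, mem_Ioo] at hx
      have : 0 < c * (x - l₁) * (x - l₂) * (l₃ - x) * (l₄ - x) := by
        repeat' apply mul_pos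
        all_goals linarith
      linarith [hf' x]
  have hanti₂ : StrictAntiOn f (Icc l₃ l₄) :=
    strictAntiOn_of_deriv_neg (convex_Icc _ _) hf.continuousOn fun x hx => by
      rw [interior_Icc, mem_Ioo] at hx
      have : 0 < c * (x - l₁) * (x - l₂) * (x - l₃) * (l₄ - x) := by
        repeat' apply mul_pos
        all_goals linarith
      linarith [hf' x]
  rcases le_total x l₂ with hx₂ | hx₂
  · exact (isMaxOn_Iic_of_mono_anti hmono₁.monotoneOn hanti₁.antitoneOn hx₂).trans_lt h₁
  · exact (isMaxOn_Icc_of_mono_anti hmono₂.monotoneOn hanti₂.antitoneOn ⟨hx₂, hx⟩).trans_lt h₃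

theorem exists_preimage_zero_eq_singleton_of_deriv_eq (hf : Continuous f) (hc : 0 < c)
    (h12 : l₁ < l₂) (h23 : l₂ < l₃) (h34 : l₃ < l₄)
    (hf' : ∀ x, deriv f x = c * (x - l₁) * (x - l₂) * (x - l₃) * (x - l₄))
    (h₁ : f l₁ < 0) (h₃ : f l₃ < 0) : ∃ ζ, l₄ < ζ ∧ f ⁻¹' {0} = {ζ} := by
  have hneg : ∀ x ≤ l₄, f x < 0 := fun x => neg_of_le_of_deriv_eq hf hc h12 h23 h34 hf' h₁ h₃
  have hmono : StrictMonoOn f (Ici l₄) :=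
    strictMonoOn_of_deriv_pos (convex_Ici _) hf.continuousOn fun x hx => by
      rw [interior_Ici, mem_Ioi] at hx
      rw [hf']
      repeat' apply mul_pos
      all_goals linarith
  have htendsto : Tendsto f atTop atTop :=
    tendsto_atTop_of_le_deriv (a := l₄ + 1) hc hf.continuousOn fun x hx => by
      rw [mem_Ioi] at hx
      have : 1 ≤ (x - l₁) * (x - l₂) * (x - l₃) * (x - l₄) := by
        repeat' apply one_le_mul_of_one_le_of_one_le
        all_goals linarith
      rw [hf']
      linarith [le_mul_of_one_le_right hc.le this]
  obtain ⟨b, hb, hfb⟩ := ((eventually_ge_atTop l₄).and (htendsto.eventually_gt_atTop 0)).exists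
  obtain ⟨ζ, hζ, hfζ⟩ := intermediate_value_Icc hb hf.continuousOn ⟨(hneg l₄ le_rfl).le, hfb.le⟩
  have hlt : l₄ < ζ := lt_of_not_ge fun h => (hneg ζ h).ne hfζ
  refine ⟨ζ, hlt, eq_singleton_iff_unique_mem.2 ⟨hfζ, fun x hx => ?_⟩⟩
  have hx₄ : l₄ < x := lt_of_not_ge fun h => (hneg x h).ne hx
  exact hmono.injOn hx₄.le hlt.le (hx.trans hfζ.symm)

theorem stmt_11_general (a₀ a₁ a₂ a₃ a₄ b₀ b₁ b₂ b₃ b₄ : ℝ)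
    (ha₀ : 0 < a₀) (ha₁ : 0 < a₁) (ha₂ : 0 < a₂) (ha₃ : 0 < a₃) (ha₄ : 0 < a₄)
    (Q : ℝ × ℝ → ℝ × ℝ)
    (hQ : ∀ x y : ℝ, Q (x, y) =
      (a₀ * x ^ 4 + 4 * a₁ * x ^ 3 * y + 6 * a₂ * x ^ 2 * y ^ 2 + 4 * a₃ * x * y ^ 3 + a₄ * y ^ 4,
       b₀ * x ^ 4 + 4 * b₁ * x ^ 3 * y + 6 * b₂ * x ^ 2 * y ^ 2 + 4 * b₃ * x * y ^ 3 + b₄ * y ^ 4))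
    (P₅ : ℝ → ℝ)
    (hP₅ : ∀ ξ : ℝ, P₅ ξ = a₄ * ξ ^ 5 + (4 * a₃ - b₄) * ξ ^ 4 + (6 * a₂ - 4 * b₃) * ξ ^ 3
      + (4 * a₁ - 6 * b₂) * ξ ^ 2 + (a₀ - 4 * b₁) * ξ - b₀)
    (lam₁ lam₂ lam₃ lam₄ : ℝ) (h12 : lam₁ < lam₂) (h23 : lam₂ < lam₃) (h34 : lam₃ < lam₄)
    (hcrit : ∀ ξ : ℝ, deriv P₅ ξ = 5 * a₄ * (ξ - lam₁) * (ξ - lam₂) * (ξ - lam₃) * (ξ - lam₄))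
    (hpos : 0 < lam₁) (hval₁ : P₅ lam₁ < 0) (hval₃ : P₅ lam₃ < 0) :
    ({p : ℝ × ℝ | 0 < p.1 ∧ 0 < p.2 ∧ Q p = p}).encard = 1 := by
  have hP₅_cont : Continuous P₅ := by
    rw [funext hP₅]
    fun_prop
  obtain ⟨ζ, hζ, hroots⟩ := exists_preimage_zero_eq_singleton_of_deriv_eq hP₅_cont
    (by positivity) h12 h23 h34 hcrit hval₁ hval₃
  have hhom : ∀ t : ℝ, 0 < t → ∀ v, Q (t • v) = t ^ (3 + 1) • Q v := by
    rintro t - ⟨x, y⟩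
    simp only [Prod.smul_mk, smul_eq_mul, hQ, Prod.mk.injEq]
    constructor <;> ring
  have hslope_iff : ∀ ξ, (Q (1, ξ)).2 = ξ * (Q (1, ξ)).1 ↔ P₅ ξ = 0 := fun ξ => by
    rw [hQ, hP₅]
    constructor <;> intro h <;> linear_combination -h
  have hζ_pos : 0 < ζ := by linarith
  have hslopes : {ξ | 0 < ξ ∧ 0 < (Q (1, ξ)).1 ∧ (Q (1, ξ)).2 = ξ * (Q (1, ξ)).1} = {ζ} := by
    refine Subset.antisymm (fun ξ hξ => hroots ▸ (hslope_iff ξ).1 hξ.2.2) ?_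
    refine singleton_subset_iff.2 ⟨hζ_pos, ?_, (hslope_iff ζ).2 (hroots.symm.subset rfl)⟩
    rw [hQ]
    positivity
  rw [setOf_pos_fixed_eq_image_of_homogeneous three_ne_zero hhom, hslopes, image_singleton,
    encard_singleton]

theorem stmt_11 (a₀ a₁ a₂ a₃ a₄ b₀ b₁ b₂ b₃ b₄ : ℝ)
    (ha₀ : 0 < a₀) (ha₁ : 0 < a₁) (ha₂ : 0 < a₂) (ha₃ : 0 < a₃) (ha₄ : 0 < a₄)
    (hb₀ : 0 < b₀) (hb₁ : 0 < b₁) (hb₂ : 0 < b₂) (hb₃ : 0 < b₃) (hb₄ : 0 < b₄)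
    (Q : ℝ × ℝ → ℝ × ℝ)
    (hQ : ∀ x y : ℝ, Q (x, y) =
      (a₀ * x ^ 4 + 4 * a₁ * x ^ 3 * y + 6 * a₂ * x ^ 2 * y ^ 2 + 4 * a₃ * x * y ^ 3 + a₄ * y ^ 4,
       b₀ * x ^ 4 + 4 * b₁ * x ^ 3 * y + 6 * b₂ * x ^ 2 * y ^ 2 + 4 * b₃ * x * y ^ 3 + b₄ * y ^ 4))
    (P₅ : ℝ → ℝ)
    (hP₅ : ∀ ξ : ℝ, P₅ ξ = a₄ * ξ ^ 5 + (4 * a₃ - b₄) * ξ ^ 4 + (6 * a₂ - 4 * b₃) * ξ ^ 3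
      + (4 * a₁ - 6 * b₂) * ξ ^ 2 + (a₀ - 4 * b₁) * ξ - b₀)
    (lam₁ lam₂ lam₃ lam₄ : ℝ) (h12 : lam₁ < lam₂) (h23 : lam₂ < lam₃) (h34 : lam₃ < lam₄)
    (hcrit : ∀ ξ : ℝ, deriv P₅ ξ = 5 * a₄ * (ξ - lam₁) * (ξ - lam₂) * (ξ - lam₃) * (ξ - lam₄))
    (hpos : 0 < lam₁) (hval₁ : P₅ lam₁ < 0) (hval₃ : P₅ lam₃ < 0) :
    ({p : ℝ × ℝ | 0 < p.1 ∧ 0 < p.2 ∧ Q p = p}).encard = 1 :=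
  stmt_11_general a₀ a₁ a₂ a₃ a₄ b₀ b₁ b₂ b₃ b₄ ha₀ ha₁ ha₂ ha₃ ha₄ Q hQ P₅ hP₅ lam₁ lam₂ lam₃ lam₄
    h12 h23 h34 hcrit hpos hval₁ hval₃
end QuarticDerivative
end

section
/- Suppose the four critical points λ₁<λ₂<λ₃<λ₄ of P₅ are all positive, i.e. λ₁ > 0, and that P₅(λ₁) = 0 and P₅(λ₄) = 0. Then the quartic operator Q has exactly three positive fixed points: the set {(x,y) ∈ ℝ² : x>0, y>0, Q(x,y)=(x,y)} has cardinality exactly 3. -/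
/-!
On a positive point written as `(x, t x)`, a map of the form
`(x, y) ↦ (xⁿ A(y/x), xⁿ B(y/x))` with `n ≥ 2` and `A > 0` is fixed exactly when
`x^(n-1) A(t) = 1` and `t A(t) = B(t)`. The first equation determines `x` from `t`, so positive
fixed points correspond bijectively to positive roots of `t A(t) - B(t)`, which for the quartic
operator is `P₅`. The factorisation of `P₅'` makes `P₅` alternately increase and decrease across
`λ₁ < ⋯ < λ₄`; as `P₅(λ₁) = P₅(λ₄) = 0`, `P₅` is negative at `λ₂` and positive at `λ₃`, so its zeros
are exactly `λ₁`, `λ₄` and one point of `(λ₂, λ₃)`, all positive.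
-/

open Set

section HomogeneousFixedPoints

variable {n : ℕ} {A B : ℝ → ℝ}

noncomputable def rayScale (n : ℕ) (A : ℝ → ℝ) (t : ℝ) : ℝ := (A t)⁻¹ ^ ((↑(n - 1) : ℝ)⁻¹)

theorem rayScale_pos {t : ℝ} (ht : 0 < A t) : 0 < rayScale n A t := by
  unfold rayScale; positivity

theorem eq_rayScale_iff (hn : 1 < n) {x t : ℝ} (hx : 0 < x) (ht : 0 < A t) :
    x = rayScale n A t ↔ x ^ (n - 1) * A t = 1 := by
  have hpow : rayScale n A t ^ (n - 1) = (A t)⁻¹ :=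
    Real.rpow_inv_natCast_pow (inv_nonneg.2 ht.le) (by omega)
  rw [← pow_left_inj₀ hx.le (rayScale_pos ht).le (by omega : n - 1 ≠ 0), hpow,
    mul_eq_one_iff_eq_inv₀ ht.ne']

theorem homogeneous_fixed_iff (hn : 1 < n) {x t : ℝ} (hx : 0 < x) (ht : 0 < A t) :
    (x ^ n * A t, x ^ n * B t) = (x, t * x) ↔ x = rayScale n A t ∧ t * A t = B t := by
  have hxn : x ^ n = x * x ^ (n - 1) := by rw [← pow_succ']; congr 1; omega
  rw [eq_rayScale_iff hn hx ht, Prod.mk.injEq, hxn]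
  constructor
  · rintro ⟨h₁, h₂⟩
    have hA : x ^ (n - 1) * A t = 1 := mul_left_cancel₀ hx.ne' (by linear_combination h₁)
    have hB : x ^ (n - 1) * B t = t := mul_left_cancel₀ hx.ne' (by linear_combination h₂)
    exact ⟨hA, by linear_combination B t * hA - A t * hB⟩
  · rintro ⟨hA, hroot⟩
    exact ⟨by linear_combination x * hA,
      by linear_combination (x * t) * hA - x * x ^ (n - 1) * hroot⟩

theorem encard_posFixedPoints_eq_encard_posRoots (hn : 1 < n) (hA : ∀ t, 0 < t → 0 < A t)
    {Q : ℝ × ℝ → ℝ × ℝ} (hQ : ∀ x y, 0 < x → Q (x, y) = (x ^ n * A (y / x), x ^ n * B (y / x))) :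
    {p : ℝ × ℝ | 0 < p.1 ∧ 0 < p.2 ∧ Q p = p}.encard = {t | 0 < t ∧ t * A t = B t}.encard := by
  have himage : {p : ℝ × ℝ | 0 < p.1 ∧ 0 < p.2 ∧ Q p = p} =
      (fun t ↦ (rayScale n A t, t * rayScale n A t)) '' {t | 0 < t ∧ t * A t = B t} := by
    ext ⟨x, y⟩
    constructor
    · rintro ⟨hx, hy, hfix⟩
      have ht : 0 < y / x := div_pos hy hx
      have hyx : y / x * x = y := div_mul_cancel₀ y hx.ne'
      have hfix' : (x ^ n * A (y / x), x ^ n * B (y / x)) = (x, y / x * x) := by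
        rw [hyx, ← hQ x y hx, hfix]
      rw [homogeneous_fixed_iff hn hx (hA _ ht)] at hfix'
      obtain ⟨hxr, hroot⟩ := hfix'
      refine ⟨y / x, ⟨ht, hroot⟩, ?_⟩
      change (rayScale n A (y / x), y / x * rayScale n A (y / x)) = (x, y)
      rw [← hxr, hyx]
    · rintro ⟨t, ⟨ht, hroot⟩, hxy⟩
      obtain ⟨rfl, rfl⟩ := Prod.mk.injEq _ _ _ _ ▸ hxy
      have hr := rayScale_pos (n := n) (hA t ht)
      refine ⟨hr, mul_pos ht hr, ?_⟩
      rw [hQ _ _ hr, mul_div_cancel_right₀ t hr.ne', homogeneous_fixed_iff hn hr (hA t ht)]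
      exact ⟨rfl, hroot⟩
  rw [himage, InjOn.encard_image]
  intro s _ t ht h
  obtain ⟨hs, hst⟩ := Prod.mk.injEq _ _ _ _ ▸ h
  rw [hs] at hst
  exact mul_right_cancel₀ (rayScale_pos (hA t ht.1)).ne' hst

end HomogeneousFixedPoints

section FourCriticalPoints

variable {P : ℝ → ℝ} {l₁ l₂ l₃ l₄ : ℝ}

theorem exists_zeros_eq_of_strictMonoOn_of_strictAntiOn (hP : Continuous P)
    (h12 : l₁ < l₂) (h23 : l₂ < l₃) (h34 : l₃ < l₄)
    (hmono₁ : StrictMonoOn P (Iic l₁)) (hanti₂ : StrictAntiOn P (Icc l₁ l₂))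
    (hmono₃ : StrictMonoOn P (Icc l₂ l₃)) (hanti₄ : StrictAntiOn P (Icc l₃ l₄))
    (hmono₅ : StrictMonoOn P (Ici l₄)) (hl₁ : P l₁ = 0) (hl₄ : P l₄ = 0) :
    ∃ μ ∈ Ioo l₂ l₃, {ξ | P ξ = 0} = {l₁, μ, l₄} := by
  have hl₂ : P l₂ < 0 := hl₁ ▸ hanti₂ (left_mem_Icc.2 h12.le) (right_mem_Icc.2 h12.le) h12
  have hl₃ : 0 < P l₃ := hl₄ ▸ hanti₄ (left_mem_Icc.2 h34.le) (right_mem_Icc.2 h34.le) h34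
  obtain ⟨μ, hμ, hPμ⟩ := intermediate_value_Ioo h23.le hP.continuousOn ⟨hl₂, hl₃⟩
  refine ⟨μ, hμ, Subset.antisymm (fun ξ hξ ↦ ?_) ?_⟩
  · simp only [mem_ofPred_eq] at hξ
    simp only [mem_insert_iff, mem_singleton_iff]
    rcases lt_trichotomy ξ l₁ with h1 | rfl | h1
    · exact ((hmono₁ h1.le self_mem_Iic h1).ne (hξ.trans hl₁.symm)).elim
    · exact Or.inl rfl
    rcases le_or_gt ξ l₂ with h2 | h2
    · exact ((hanti₂ (left_mem_Icc.2 h12.le) ⟨h1.le, h2⟩ h1).ne (hξ.trans hl₁.symm)).elim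
    rcases lt_or_ge ξ l₃ with h3 | h3
    · exact Or.inr (Or.inl (hmono₃.injOn ⟨h2.le, h3.le⟩ ⟨hμ.1.le, hμ.2.le⟩ (hξ.trans hPμ.symm)))
    rcases lt_trichotomy ξ l₄ with h4 | rfl | h4
    · exact ((hanti₄ ⟨h3, h4.le⟩ (right_mem_Icc.2 h34.le) h4).ne' (hξ.trans hl₄.symm)).elim
    · exact Or.inr (Or.inr rfl)
    · exact ((hmono₅ self_mem_Ici h4.le h4).ne' (hξ.trans hl₄.symm)).elim
  · rintro ξ (rfl | rfl | rfl) <;> assumption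


theorem exists_zeros_eq_of_deriv_eq_mul (hP : Continuous P) {c : ℝ} (hc : 0 < c)
    (hP' : ∀ ξ, deriv P ξ = c * (ξ - l₁) * (ξ - l₂) * (ξ - l₃) * (ξ - l₄))
    (h12 : l₁ < l₂) (h23 : l₂ < l₃) (h34 : l₃ < l₄) (hl₁ : P l₁ = 0) (hl₄ : P l₄ = 0) :
    ∃ μ ∈ Ioo l₂ l₃, {ξ | P ξ = 0} = {l₁, μ, l₄} := by
  refine exists_zeros_eq_of_strictMonoOn_of_strictAntiOn hP h12 h23 h34 ?_ ?_ ?_ ?_ ?_ hl₁ hl₄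
  · refine strictMonoOn_of_deriv_pos (convex_Iic _) hP.continuousOn fun ξ hξ ↦ ?_
    have h1 : ξ < l₁ := by simpa using hξ
    rw [hP']
    exact mul_pos_of_neg_of_neg (mul_neg_of_pos_of_neg (mul_pos_of_neg_of_neg
      (mul_neg_of_pos_of_neg hc (by linarith)) (by linarith)) (by linarith)) (by linarith)
  · refine strictAntiOn_of_deriv_neg (convex_Icc _ _) hP.continuousOn fun ξ hξ ↦ ?_
    obtain ⟨h1, h2⟩ : l₁ < ξ ∧ ξ < l₂ := by simpa using hξ
    rw [hP']
    exact mul_neg_of_pos_of_neg (mul_pos_of_neg_of_neg (mul_neg_of_pos_of_neg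
      (mul_pos hc (by linarith)) (by linarith)) (by linarith)) (by linarith)
  · refine strictMonoOn_of_deriv_pos (convex_Icc _ _) hP.continuousOn fun ξ hξ ↦ ?_
    obtain ⟨h2, h3⟩ : l₂ < ξ ∧ ξ < l₃ := by simpa using hξ
    rw [hP']
    exact mul_pos_of_neg_of_neg (mul_neg_of_pos_of_neg (mul_pos
      (mul_pos hc (by linarith)) (by linarith)) (by linarith)) (by linarith)
  · refine strictAntiOn_of_deriv_neg (convex_Icc _ _) hP.continuousOn fun ξ hξ ↦ ?_
    obtain ⟨h3, h4⟩ : l₃ < ξ ∧ ξ < l₄ := by simpa using hξ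
    rw [hP']
    exact mul_neg_of_pos_of_neg (mul_pos (mul_pos
      (mul_pos hc (by linarith)) (by linarith)) (by linarith)) (by linarith)
  · refine strictMonoOn_of_deriv_pos (convex_Ici _) hP.continuousOn fun ξ hξ ↦ ?_
    have h4 : l₄ < ξ := by simpa using hξ
    rw [hP']
    exact mul_pos (mul_pos (mul_pos
      (mul_pos hc (by linarith)) (by linarith)) (by linarith)) (by linarith)

end FourCriticalPoints

def dehomQuartic (c₀ c₁ c₂ c₃ c₄ t : ℝ) : ℝ :=
  c₀ + 4 * c₁ * t + 6 * c₂ * t ^ 2 + 4 * c₃ * t ^ 3 + c₄ * t ^ 4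

theorem quartic_eq_pow_mul_dehomQuartic (c₀ c₁ c₂ c₃ c₄ : ℝ) {x : ℝ} (hx : x ≠ 0) (y : ℝ) :
    c₀ * x ^ 4 + 4 * c₁ * x ^ 3 * y + 6 * c₂ * x ^ 2 * y ^ 2 + 4 * c₃ * x * y ^ 3 + c₄ * y ^ 4 =
      x ^ 4 * dehomQuartic c₀ c₁ c₂ c₃ c₄ (y / x) := by
  unfold dehomQuartic
  field_simp

theorem stmt_14_general (a₀ a₁ a₂ a₃ a₄ b₀ b₁ b₂ b₃ b₄ : ℝ)
    (ha₀ : 0 < a₀) (ha₁ : 0 < a₁) (ha₂ : 0 < a₂) (ha₃ : 0 < a₃) (ha₄ : 0 < a₄)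
    (Q : ℝ × ℝ → ℝ × ℝ)
    (hQ : ∀ x y : ℝ, Q (x, y) =
      (a₀ * x ^ 4 + 4 * a₁ * x ^ 3 * y + 6 * a₂ * x ^ 2 * y ^ 2 + 4 * a₃ * x * y ^ 3 + a₄ * y ^ 4,
       b₀ * x ^ 4 + 4 * b₁ * x ^ 3 * y + 6 * b₂ * x ^ 2 * y ^ 2 + 4 * b₃ * x * y ^ 3 + b₄ * y ^ 4))
    (P₅ : ℝ → ℝ)
    (hP₅ : ∀ ξ : ℝ, P₅ ξ = a₄ * ξ ^ 5 + (4 * a₃ - b₄) * ξ ^ 4 + (6 * a₂ - 4 * b₃) * ξ ^ 3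
      + (4 * a₁ - 6 * b₂) * ξ ^ 2 + (a₀ - 4 * b₁) * ξ - b₀)
    (lam₁ lam₂ lam₃ lam₄ : ℝ) (h12 : lam₁ < lam₂) (h23 : lam₂ < lam₃) (h34 : lam₃ < lam₄)
    (hcrit : ∀ ξ : ℝ, deriv P₅ ξ = 5 * a₄ * (ξ - lam₁) * (ξ - lam₂) * (ξ - lam₃) * (ξ - lam₄))
    (hpos : 0 < lam₁) (hval₁ : P₅ lam₁ = 0) (hval₄ : P₅ lam₄ = 0) :
    ({p : ℝ × ℝ | 0 < p.1 ∧ 0 < p.2 ∧ Q p = p}).encard = 3 := by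
  set A := dehomQuartic a₀ a₁ a₂ a₃ a₄
  set B := dehomQuartic b₀ b₁ b₂ b₃ b₄
  have hA : ∀ t, 0 < t → 0 < A t := fun t ht ↦ by unfold A dehomQuartic; positivity
  have hQ' (x y : ℝ) (hx : 0 < x) : Q (x, y) = (x ^ 4 * A (y / x), x ^ 4 * B (y / x)) := by
    rw [hQ, quartic_eq_pow_mul_dehomQuartic _ _ _ _ _ hx.ne',
      quartic_eq_pow_mul_dehomQuartic _ _ _ _ _ hx.ne']
  have hroots : {t | 0 < t ∧ t * A t = B t} = {t | 0 < t ∧ P₅ t = 0} := by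
    ext t
    rw [mem_ofPred_eq, mem_ofPred_eq, ← sub_eq_zero, hP₅]
    unfold A B dehomQuartic
    ring_nf
  obtain ⟨μ, hμ, hzeros⟩ := exists_zeros_eq_of_deriv_eq_mul
    (by rw [funext hP₅]; fun_prop) (by positivity) hcrit h12 h23 h34 hval₁ hval₄
  rw [encard_posFixedPoints_eq_encard_posRoots (by norm_num) hA hQ', hroots, encard_eq_three]
  refine ⟨lam₁, μ, lam₄, (h12.trans hμ.1).ne, (h12.trans (h23.trans h34)).ne,
    (hμ.2.trans h34).ne, ?_⟩
  rw [ofPred_and, hzeros, inter_eq_right]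
  rintro t (rfl | rfl | rfl)
  exacts [hpos, hpos.trans (h12.trans hμ.1), hpos.trans (h12.trans (h23.trans h34))]

theorem stmt_14 (a₀ a₁ a₂ a₃ a₄ b₀ b₁ b₂ b₃ b₄ : ℝ)
    (ha₀ : 0 < a₀) (ha₁ : 0 < a₁) (ha₂ : 0 < a₂) (ha₃ : 0 < a₃) (ha₄ : 0 < a₄)
    (hb₀ : 0 < b₀) (hb₁ : 0 < b₁) (hb₂ : 0 < b₂) (hb₃ : 0 < b₃) (hb₄ : 0 < b₄)
    (Q : ℝ × ℝ → ℝ × ℝ)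
    (hQ : ∀ x y : ℝ, Q (x, y) =
      (a₀ * x ^ 4 + 4 * a₁ * x ^ 3 * y + 6 * a₂ * x ^ 2 * y ^ 2 + 4 * a₃ * x * y ^ 3 + a₄ * y ^ 4,
       b₀ * x ^ 4 + 4 * b₁ * x ^ 3 * y + 6 * b₂ * x ^ 2 * y ^ 2 + 4 * b₃ * x * y ^ 3 + b₄ * y ^ 4))
    (P₅ : ℝ → ℝ)
    (hP₅ : ∀ ξ : ℝ, P₅ ξ = a₄ * ξ ^ 5 + (4 * a₃ - b₄) * ξ ^ 4 + (6 * a₂ - 4 * b₃) * ξ ^ 3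
      + (4 * a₁ - 6 * b₂) * ξ ^ 2 + (a₀ - 4 * b₁) * ξ - b₀)
    (lam₁ lam₂ lam₃ lam₄ : ℝ) (h12 : lam₁ < lam₂) (h23 : lam₂ < lam₃) (h34 : lam₃ < lam₄)
    (hcrit : ∀ ξ : ℝ, deriv P₅ ξ = 5 * a₄ * (ξ - lam₁) * (ξ - lam₂) * (ξ - lam₃) * (ξ - lam₄))
    (hpos : 0 < lam₁) (hval₁ : P₅ lam₁ = 0) (hval₄ : P₅ lam₄ = 0) :
    ({p : ℝ × ℝ | 0 < p.1 ∧ 0 < p.2 ∧ Q p = p}).encard = 3 :=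
  stmt_14_general a₀ a₁ a₂ a₃ a₄ b₀ b₁ b₂ b₃ b₄ ha₀ ha₁ ha₂ ha₃ ha₄ Q hQ P₅ hP₅ lam₁ lam₂ lam₃ lam₄
    h12 h23 h34 hcrit hpos hval₁ hval₄
end

section
/- The map sending g to the function t ↦ (g(t)/g(0))^k is a bijection from the set of nontrivial positive fixed points of the Hammerstein operator H_k onto the set of nontrivial positive fixed points of the operator R_k; in particular, these two sets have the same cardinality. -/
/-!
Both operators are built from `A f = ∫ K(·,u) f(u) du`: `H_k g = A (g^k)` and
`R_k f = (A f / (A f)(0))^k`. Since `H_k` is homogeneous of degree `k` and `R_k` is invariant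
under positive rescaling, a fixed point `g` of `H_k` gives `A ((g/g(0))^k) = g / g(0)^k`, a
multiple of `g`, so `(g/g(0))^k` is fixed by `R_k`. Conversely, a fixed point `f` of `R_k`
satisfies `(A f)^k = (A f)(0)^k f`, so the rescaling `c A f` with `c^(k-1) = (A f)(0)^(-k)` is
fixed by `H_k`. Two fixed points of `H_k` with the same image differ by a factor `c > 0` with
`c^k = c`, and `k ≥ 2` forces `c = 1`.
-/

open MeasureTheory Function

theorem eq_one_of_pow_eq_self {R : Type*} [Semifield R] [LinearOrder R] [IsStrictOrderedRing R]
    {c : R} {k : ℕ} (hc : 0 < c) (hk : 2 ≤ k) (h : c ^ k = c) : c = 1 := by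
  have hpow : c * c ^ (k - 1) = c * 1 := by
    rw [← pow_succ', Nat.sub_add_cancel (by omega), h, mul_one]
  exact (pow_eq_one_iff_of_nonneg hc.le (by omega)).mp (mul_left_cancel₀ hc.ne' hpow)

theorem exists_pos_pow_mul_pow_eq_self {a : ℝ} (ha : 0 < a) {k : ℕ} (hk : 2 ≤ k) :
    ∃ c > 0, c ^ k * a ^ k = c := by
  set c := ((a ^ k)⁻¹) ^ ((k - 1 : ℕ)⁻¹ : ℝ)
  have hc : c ^ (k - 1) = (a ^ k)⁻¹ := Real.rpow_inv_natCast_pow (by positivity) (by omega)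
  refine ⟨c, by positivity, ?_⟩
  rw [← Nat.sub_add_cancel (by omega : 1 ≤ k), pow_succ', mul_assoc,
    Nat.sub_add_cancel (by omega), hc, inv_mul_cancel₀ (by positivity), mul_one]

section Normalization

variable {X : Type*} {k : ℕ} {x₀ : X}

noncomputable def normalizePow (x₀ : X) (k : ℕ) (g : X → ℝ) (t : X) : ℝ :=
  (g t / g x₀) ^ k

def nonnegFixedPoints [TopologicalSpace X] (T : (X → ℝ) → X → ℝ) : Set (X → ℝ) :=
  {f | Continuous f ∧ (∀ t, 0 ≤ f t) ∧ f ≠ 0 ∧ T f = f}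

theorem normalizePow_eq_smul_pow (g : X → ℝ) : normalizePow x₀ k g = (g x₀ ^ k)⁻¹ • g ^ k := by
  funext t
  simp only [normalizePow, div_pow, Pi.smul_apply, Pi.pow_apply, smul_eq_mul, inv_mul_eq_div]

theorem normalizePow_smul {c : ℝ} (hc : c ≠ 0) (g : X → ℝ) :
    normalizePow x₀ k (c • g) = normalizePow x₀ k g := by
  funext t
  simp only [normalizePow, Pi.smul_apply, smul_eq_mul, mul_div_mul_left _ _ hc]

theorem eq_smul_of_normalizePow_eq (hk : k ≠ 0) {g₁ g₂ : X → ℝ} (hg₁ : ∀ t, 0 ≤ g₁ t)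
    (hg₂ : ∀ t, 0 ≤ g₂ t) (hg₁₀ : 0 < g₁ x₀) (hg₂₀ : 0 < g₂ x₀)
    (h : normalizePow x₀ k g₁ = normalizePow x₀ k g₂) : g₁ = (g₁ x₀ / g₂ x₀) • g₂ := by
  funext t
  have ht : g₁ t / g₁ x₀ = g₂ t / g₂ x₀ :=
    (pow_left_inj₀ (div_nonneg (hg₁ t) hg₁₀.le) (div_nonneg (hg₂ t) hg₂₀.le) hk).mp
      (congrFun h t)
  rw [div_eq_div_iff hg₁₀.ne' hg₂₀.ne'] at ht
  simp only [Pi.smul_apply, smul_eq_mul]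
  field_simp
  linarith

end Normalization

section Operators

variable {X : Type*} [MeasurableSpace X]

noncomputable def kernelOp (μ : Measure X) (K : X → X → ℝ) (f : X → ℝ) (t : X) : ℝ :=
  ∫ u, K t u * f u ∂μ

noncomputable def hammersteinOp (μ : Measure X) (K : X → X → ℝ) (k : ℕ) (f : X → ℝ) :
    X → ℝ :=
  kernelOp μ K (f ^ k)

noncomputable def ratioOp (μ : Measure X) (K : X → X → ℝ) (x₀ : X) (k : ℕ) (f : X → ℝ) :
    X → ℝ :=
  normalizePow x₀ k (kernelOp μ K f)

variable {μ : Measure X} {K : X → X → ℝ} {k : ℕ} {x₀ : X}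

theorem kernelOp_smul (c : ℝ) (f : X → ℝ) : kernelOp μ K (c • f) = c • kernelOp μ K f := by
  funext t
  simp only [kernelOp, Pi.smul_apply, smul_eq_mul, mul_left_comm _ c, integral_const_mul]

theorem hammersteinOp_smul (c : ℝ) (g : X → ℝ) :
    hammersteinOp μ K k (c • g) = c ^ k • hammersteinOp μ K k g := by
  rw [hammersteinOp, smul_pow, kernelOp_smul, hammersteinOp]

theorem ratioOp_normalizePow_of_hammersteinOp_eq {g : X → ℝ} (hg : hammersteinOp μ K k g = g)
    (hg₀ : g x₀ ≠ 0) : ratioOp μ K x₀ k (normalizePow x₀ k g) = normalizePow x₀ k g := by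
  have hA : kernelOp μ K (normalizePow x₀ k g) = (g x₀ ^ k)⁻¹ • g := by
    rw [normalizePow_eq_smul_pow, kernelOp_smul, ← hammersteinOp, hg]
  rw [ratioOp, hA, normalizePow_smul (inv_ne_zero (pow_ne_zero k hg₀))]

end Operators

section Analysis

variable {X : Type*} [TopologicalSpace X] [CompactSpace X] [MeasurableSpace X]
  [OpensMeasurableSpace X] {μ : Measure X} [IsFiniteMeasure μ] {K : X → X → ℝ} {k : ℕ}

theorem kernelOp_pos [μ.IsOpenPosMeasure] (hK : ∀ t, Continuous (K t))
    (hKpos : ∀ t u, 0 < K t u) {f : X → ℝ} (hf : Continuous f) (hf₀ : ∀ t, 0 ≤ f t)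
    (hne : f ≠ 0) (t : X) : 0 < kernelOp μ K f t := by
  obtain ⟨u, hu⟩ := Function.ne_iff.mp hne
  have hKf : Continuous fun u => K t u * f u := (hK t).mul hf
  exact integral_pos_of_integrable_nonneg_nonzero hKf
    (hKf.integrable_of_hasCompactSupport (HasCompactSupport.of_compactSpace _))
    (fun u => mul_nonneg (hKpos t u).le (hf₀ u)) (mul_ne_zero (hKpos t u).ne' hu)

theorem continuous_kernelOp [FirstCountableTopology X] [LocallyCompactSpace X]
    (hK : Continuous (uncurry K)) {f : X → ℝ} (hf : Continuous f) :
    Continuous (kernelOp μ K f) := by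
  unfold kernelOp
  simpa only [Measure.restrict_univ] using continuous_parametric_integral_of_continuous
    (μ := μ) (f := fun t u => K t u * f u) (hK.mul (hf.comp continuous_snd)) isCompact_univ

theorem pos_of_mem_nonnegFixedPoints_hammersteinOp [μ.IsOpenPosMeasure]
    (hK : ∀ t, Continuous (K t)) (hKpos : ∀ t u, 0 < K t u) {g : X → ℝ}
    (hg : g ∈ nonnegFixedPoints (hammersteinOp μ K k)) (t : X) : 0 < g t := by
  obtain ⟨hgc, hg₀, hne, hfix⟩ := hg
  rw [← hfix]
  refine kernelOp_pos hK hKpos (hgc.pow k) (fun u => pow_nonneg (hg₀ u) k) (fun h => hne ?_) t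
  funext u
  exact (pow_eq_zero_iff'.mp (congrFun h u)).1

end Analysis

section Bijection

variable {X : Type*} [TopologicalSpace X] [CompactSpace X] [MeasurableSpace X]
  [OpensMeasurableSpace X] {μ : Measure X} [IsFiniteMeasure μ] [μ.IsOpenPosMeasure]
  {K : X → X → ℝ} {k : ℕ}

theorem mapsTo_normalizePow (hK : ∀ t, Continuous (K t)) (hKpos : ∀ t u, 0 < K t u) (x₀ : X) :
    Set.MapsTo (normalizePow x₀ k) (nonnegFixedPoints (hammersteinOp μ K k))
      (nonnegFixedPoints (ratioOp μ K x₀ k)) := by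
  intro g hg
  have hpos := pos_of_mem_nonnegFixedPoints_hammersteinOp hK hKpos hg
  refine ⟨(hg.1.div_const _).pow k, fun t => pow_nonneg (div_nonneg (hpos t).le (hpos x₀).le) k,
    fun h => ?_, ratioOp_normalizePow_of_hammersteinOp_eq hg.2.2.2 (hpos x₀).ne'⟩
  simpa [normalizePow, (hpos x₀).ne'] using congrFun h x₀

theorem injOn_normalizePow (hK : ∀ t, Continuous (K t)) (hKpos : ∀ t u, 0 < K t u)
    (hk : 2 ≤ k) (x₀ : X) :
    Set.InjOn (normalizePow x₀ k) (nonnegFixedPoints (hammersteinOp μ K k)) := by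
  intro g₁ hg₁ g₂ hg₂ h
  have hpos₁ := pos_of_mem_nonnegFixedPoints_hammersteinOp hK hKpos hg₁
  have hpos₂ := pos_of_mem_nonnegFixedPoints_hammersteinOp hK hKpos hg₂
  obtain ⟨c, hc₀, hg⟩ : ∃ c > 0, g₁ = c • g₂ :=
    ⟨_, div_pos (hpos₁ x₀) (hpos₂ x₀), eq_smul_of_normalizePow_eq (by omega)
      (fun t => (hpos₁ t).le) (fun t => (hpos₂ t).le) (hpos₁ x₀) (hpos₂ x₀) h⟩
  have hck : c ^ k • g₂ = c • g₂ := calc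
    c ^ k • g₂ = c ^ k • hammersteinOp μ K k g₂ := by rw [hg₂.2.2.2]
    _ = hammersteinOp μ K k g₁ := by rw [hg, hammersteinOp_smul]
    _ = c • g₂ := by rw [hg₁.2.2.2, hg]
  have hc : c ^ k = c := mul_right_cancel₀ (hpos₂ x₀).ne' (congrFun hck x₀)
  rw [hg, eq_one_of_pow_eq_self hc₀ hk hc, one_smul]

theorem surjOn_normalizePow [FirstCountableTopology X] [LocallyCompactSpace X]
    (hK : Continuous (uncurry K)) (hKpos : ∀ t u, 0 < K t u) (hk : 2 ≤ k) (x₀ : X) :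
    Set.SurjOn (normalizePow x₀ k) (nonnegFixedPoints (hammersteinOp μ K k))
      (nonnegFixedPoints (ratioOp μ K x₀ k)) := by
  rintro f ⟨hfc, hf₀, hne, hfix⟩
  have hAc := continuous_kernelOp (μ := μ) hK hfc
  have hApos := kernelOp_pos (μ := μ) (fun t => hK.uncurry_left t) hKpos hfc hf₀ hne
  have hfA : normalizePow x₀ k (kernelOp μ K f) = f := hfix
  generalize hA : kernelOp μ K f = A at hAc hApos hfA
  obtain ⟨c, hc, hck⟩ := exists_pos_pow_mul_pow_eq_self (hApos x₀) hk
  have hApow : A ^ k = A x₀ ^ k • f := by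
    rw [← hfA, normalizePow_eq_smul_pow, smul_inv_smul₀ (pow_ne_zero k (hApos x₀).ne')]
  refine ⟨c • A, ⟨hAc.const_smul c, fun t => (mul_pos hc (hApos t)).le,
    fun h => (mul_pos hc (hApos x₀)).ne' (congrFun h x₀), ?_⟩, by rwa [normalizePow_smul hc.ne']⟩
  rw [hammersteinOp_smul, hammersteinOp, hApow, kernelOp_smul, hA, smul_smul, hck]

end Bijection

instance : (volume : Measure unitInterval).IsOpenPosMeasure where
  open_pos U hU := by
    rintro ⟨x, hx⟩
    obtain ⟨V, hV, rfl⟩ := isOpen_induced_iff.mp hU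
    have hVx : (V ∩ Set.Ioo 0 1).Nonempty := by
      refine mem_closure_iff.mp ?_ V hV hx
      rw [closure_Ioo zero_ne_one]
      exact x.2
    rw [unitInterval.volume_apply, Subtype.image_preimage_coe]
    refine fun h0 => ((hV.inter isOpen_Ioo).measure_pos volume hVx).ne' ?_
    have hsub : V ∩ Set.Ioo 0 1 ⊆ unitInterval ∩ V :=
      fun y hy => ⟨Set.Ioo_subset_Icc_self hy.2, hy.1⟩
    exact measure_mono_null hsub h0

theorem stmt_19 (K : unitInterval → unitInterval → ℝ)
    (hKcont : Continuous fun p : unitInterval × unitInterval => K p.1 p.2)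
    (hKpos : ∀ t u : unitInterval, 0 < K t u)
    (k : ℕ) (hk : 2 ≤ k)
    (Rk Hk : (unitInterval → ℝ) → (unitInterval → ℝ))
    (hRk : ∀ (f : unitInterval → ℝ) (t : unitInterval),
      Rk f t = ((∫ u, K t u * f u) / (∫ u, K 0 u * f u)) ^ k)
    (hHk : ∀ (f : unitInterval → ℝ) (t : unitInterval),
      Hk f t = ∫ u, K t u * (f u) ^ k) :
    Set.BijOn (fun (g : unitInterval → ℝ) (t : unitInterval) => (g t / g 0) ^ k)
      {g : unitInterval → ℝ | Continuous g ∧ (∀ t, 0 ≤ g t) ∧ g ≠ 0 ∧ Hk g = g}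
      {f : unitInterval → ℝ | Continuous f ∧ (∀ t, 0 ≤ f t) ∧ f ≠ 0 ∧ Rk f = f} ∧
    ({g : unitInterval → ℝ | Continuous g ∧ (∀ t, 0 ≤ g t) ∧ g ≠ 0 ∧ Hk g = g}).encard =
    ({f : unitInterval → ℝ | Continuous f ∧ (∀ t, 0 ≤ f t) ∧ f ≠ 0 ∧ Rk f = f}).encard := by
  obtain rfl : Rk = ratioOp volume K 0 k := funext₂ hRk
  obtain rfl : Hk = hammersteinOp volume K k := funext₂ hHk
  have hK : ∀ t, Continuous (K t) := fun t => hKcont.uncurry_left t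
  have hbij : Set.BijOn (normalizePow 0 k) (nonnegFixedPoints (hammersteinOp volume K k))
      (nonnegFixedPoints (ratioOp volume K 0 k)) :=
    ⟨mapsTo_normalizePow hK hKpos 0, injOn_normalizePow hK hKpos hk 0,
      surjOn_normalizePow hKcont hKpos hk 0⟩
  refine ⟨hbij, ?_⟩
  change (nonnegFixedPoints _).encard = (nonnegFixedPoints _).encard
  rw [← hbij.image_eq, hbij.injOn.encard_image]
end
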